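/- arXiv:1906.04022 — 8 statements merged into one kernel-verified Lean document; each statement's English description precedes it below -/
import Mathlib

section
/- A KKT point (x, μᵍ) of the trust-region subproblem (T) is a global minimizer of (T) if and only if μᵍ is the rightmost eigenvalue of M, i.e., the eigenvalue of M with maximal real part (which is necessarily real). Furthermore, in that case μᵍ ∈ [−λ₁, ∞). -/
open Matrix Complex
open scoped Classical

noncomputable section

/-- Euclidean norm of a vector in `ℝⁿ`. -/
def euclNorm {n : ℕ} (x : Fin n → ℝ) : ℝ := Real.sqrt (x ⬝ᵥ x)

/-- The quadratic objective `f(x) = ½ xᵀPx + qᵀx`. -/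
def qobj {n : ℕ} (P : Matrix (Fin n) (Fin n) ℝ) (q : Fin n → ℝ) (x : Fin n → ℝ) : ℝ :=
  (1 / 2) * (x ⬝ᵥ P.mulVec x) + q ⬝ᵥ x

/-- The block matrix `M = [[-P, qqᵀ/r²], [I, -P]]`. -/
def trsM {n : ℕ} (P : Matrix (Fin n) (Fin n) ℝ) (q : Fin n → ℝ) (r : ℝ) :
    Matrix (Fin n ⊕ Fin n) (Fin n ⊕ Fin n) ℝ :=
  Matrix.fromBlocks (-P) ((r ^ 2)⁻¹ • Matrix.vecMulVec q q) 1 (-P)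

/-- The complexification of `M`. -/
def trsMC {n : ℕ} (P : Matrix (Fin n) (Fin n) ℝ) (q : Fin n → ℝ) (r : ℝ) :
    Matrix (Fin n ⊕ Fin n) (Fin n ⊕ Fin n) ℂ :=
  (trsM P q r).map Complex.ofReal

/-- `μ ∈ ℂ` is an eigenvalue of the complex matrix `A`. -/
def IsEig {m : Type*} [Fintype m] (A : Matrix m m ℂ) (μ : ℂ) : Prop :=
  ∃ v : m → ℂ, v ≠ 0 ∧ A.mulVec v = μ • v

/-- The secular function `s(z) = Σᵢ (wᵢᵀq)²/(λᵢ + z)² - r²` on `ℂ`. -/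
def secular {n : ℕ} (lam : Fin n → ℝ) (w : Fin n → Fin n → ℝ) (q : Fin n → ℝ) (r : ℝ)
    (z : ℂ) : ℂ :=
  (∑ i, ((w i ⬝ᵥ q : ℝ) : ℂ) ^ 2 / (((lam i : ℝ) : ℂ) + z) ^ 2) - (r : ℂ) ^ 2

/-- The secular function on `ℝ`. -/
def secularR {n : ℕ} (lam : Fin n → ℝ) (w : Fin n → Fin n → ℝ) (q : Fin n → ℝ) (r : ℝ)
    (t : ℝ) : ℝ :=
  (∑ i, (w i ⬝ᵥ q) ^ 2 / (lam i + t) ^ 2) - r ^ 2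

/-- The derivative of the secular function, `s'(t) = -2 Σᵢ (wᵢᵀq)²/(λᵢ + t)³`. -/
def secularDeriv {n : ℕ} (lam : Fin n → ℝ) (w : Fin n → Fin n → ℝ) (q : Fin n → ℝ)
    (t : ℝ) : ℝ :=
  -2 * ∑ i, (w i ⬝ᵥ q) ^ 2 / (lam i + t) ^ 3

/-- `z` is not a pole of the secular function (the poles are the `-λᵢ` with `wᵢᵀq ≠ 0`). -/
def IsNonpole {n : ℕ} (lam : Fin n → ℝ) (w : Fin n → Fin n → ℝ) (q : Fin n → ℝ) (z : ℂ) : Prop :=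
  ∀ i, w i ⬝ᵥ q ≠ 0 → z ≠ -((lam i : ℝ) : ℂ)

/-- `f` has a zero of order exactly `k` at `z`. -/
def HasZeroOfOrder (f : ℂ → ℂ) (z : ℂ) (k : ℕ) : Prop :=
  ∃ g : ℂ → ℂ, AnalyticAt ℂ g z ∧ g z ≠ 0 ∧ ∀ᶠ u in nhds z, f u = (u - z) ^ k * g u

end

/-!
For `‖y‖ = ‖x‖` the KKT equation gives `f y - f x = ½ (y - x)ᵀ (P + μ) (y - x)`, so a KKT point
is a global minimizer iff `P + μ ⪰ 0`, i.e. iff `μ ≥ -λ₁`: reflecting `x` in `v⊥` tests the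
direction `v`, and the directions orthogonal to `x` follow by continuity.

Every KKT multiplier `μ` is an eigenvalue of `M`, with eigenvector `(-x, -(P + μ)⁻¹ x)`, or
`(0, k)` for `k` in the kernel of `P + μ` (such `k` is orthogonal to `q = -(P + μ) x`).
An eigenvalue `ν` of `M` with all `λᵢ + ν ≠ 0` is a root of the secular equation
`∑ (wᵢᵀq)² / (λᵢ + ν)² = r²`. If `μ ≥ -λ₁` and `Re ν > μ`, then, writing
`wᵢᵀq = -(λᵢ + μ) wᵢᵀx`, each term has modulus less than `(wᵢᵀx)²`, and these sum to `r²`.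
Conversely `M` always has a real eigenvalue `≥ -λ₁`: `-λ₁` itself if `w₁ᵀq = 0`, and otherwise a
root of the secular equation in `(-λ₁, ∞)`, given by the intermediate value theorem, which is the
multiplier of a KKT point.
-/

open Filter Topology

namespace TrustRegion

variable {n : ℕ}

section Orthonormal

variable {K : Type*} [Field K] {u : Fin n → Fin n → K}

lemma of_mul_transpose_eq_one (hu : ∀ i j, u i ⬝ᵥ u j = if i = j then 1 else 0) :
    Matrix.of u * (Matrix.of u)ᵀ = 1 := by
  ext i j
  simpa [Matrix.mul_apply, dotProduct, Matrix.one_apply] using hu i j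

lemma transpose_mul_of_eq_one (hu : ∀ i j, u i ⬝ᵥ u j = if i = j then 1 else 0) :
    (Matrix.of u)ᵀ * Matrix.of u = 1 :=
  mul_eq_one_comm.mp (of_mul_transpose_eq_one hu)

lemma dotProduct_eq_sum_of_orthonormal (hu : ∀ i j, u i ⬝ᵥ u j = if i = j then 1 else 0)
    (v v' : Fin n → K) : v ⬝ᵥ v' = ∑ i, (u i ⬝ᵥ v) * (u i ⬝ᵥ v') := by
  calc v ⬝ᵥ v' = v ⬝ᵥ ((Matrix.of u)ᵀ * Matrix.of u) *ᵥ v' := by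
        rw [transpose_mul_of_eq_one hu, one_mulVec]
    _ = (Matrix.of u *ᵥ v) ⬝ᵥ (Matrix.of u *ᵥ v') := by
        rw [← mulVec_mulVec, dotProduct_mulVec, vecMul_transpose]

lemma eq_of_orthonormal_coords (hu : ∀ i j, u i ⬝ᵥ u j = if i = j then 1 else 0)
    {v v' : Fin n → K} (h : ∀ i, u i ⬝ᵥ v = u i ⬝ᵥ v') : v = v' := by
  have hU : Matrix.of u *ᵥ v = Matrix.of u *ᵥ v' := funext h
  simpa [mulVec_mulVec, transpose_mul_of_eq_one hu] using
    congrArg ((Matrix.of u)ᵀ *ᵥ ·) hU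

lemma dotProduct_transpose_mulVec_of_orthonormal (hu : ∀ i j, u i ⬝ᵥ u j = if i = j then 1 else 0)
    (c : Fin n → K) (i : Fin n) : u i ⬝ᵥ ((Matrix.of u)ᵀ *ᵥ c) = c i :=
  congrFun (by rw [mulVec_mulVec, of_mul_transpose_eq_one hu, one_mulVec] :
    Matrix.of u *ᵥ ((Matrix.of u)ᵀ *ᵥ c) = c) i

end Orthonormal

lemma _root_.Matrix.IsSymm.dotProduct_mulVec_comm {K : Type*} [CommRing K]
    {A : Matrix (Fin n) (Fin n) K} (hA : A.IsSymm) (u v : Fin n → K) :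
    u ⬝ᵥ (A *ᵥ v) = v ⬝ᵥ (A *ᵥ u) := by
  rw [dotProduct_mulVec, ← mulVec_transpose, hA.eq, dotProduct_comm]

lemma dotProduct_mulVec_of_eigen {K : Type*} [CommRing K] {A : Matrix (Fin n) (Fin n) K}
    (hA : A.IsSymm) {u : Fin n → K} {l : K} (h : A *ᵥ u = l • u) (v : Fin n → K) :
    u ⬝ᵥ (A *ᵥ v) = l * (u ⬝ᵥ v) := by
  rw [hA.dotProduct_mulVec_comm, h, dotProduct_smul, smul_eq_mul, dotProduct_comm]

section Block

variable {K : Type*} [Field K] {A : Matrix (Fin n) (Fin n) K} {c μ : K} {q : Fin n → K}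

-- `M` over an arbitrary field: `trsM P q r` is `trsBlock P (r ^ 2)⁻¹ q` by definition, and
-- `trsMC_eq` identifies `trsMC P q r`, so the eigenvector lemmas serve both.
def trsBlock (A : Matrix (Fin n) (Fin n) K) (c : K) (q : Fin n → K) :
    Matrix (Fin n ⊕ Fin n) (Fin n ⊕ Fin n) K :=
  fromBlocks (-A) (c • vecMulVec q q) 1 (-A)

lemma trsBlock_mulVec_elim (y z : Fin n → K) :
    trsBlock A c q *ᵥ Sum.elim y z = Sum.elim (-(A *ᵥ y) + (c * (q ⬝ᵥ z)) • q) (y - A *ᵥ z) := by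
  rw [trsBlock, fromBlocks_mulVec]
  simp only [Sum.elim_comp_inl, Sum.elim_comp_inr, neg_mulVec, one_mulVec, smul_mulVec,
    vecMulVec_mulVec, op_smul_eq_smul, smul_smul, sub_eq_add_neg]

lemma smul_sum_elim (a : K) (y z : Fin n → K) : a • Sum.elim y z = Sum.elim (a • y) (a • z) := by
  ext (i | i) <;> rfl

lemma exists_eigvec_trsBlock_of_ker {k : Fin n → K} (hk : k ≠ 0) (hAk : A *ᵥ k + μ • k = 0)
    (hqk : q ⬝ᵥ k = 0) : ∃ v ≠ 0, trsBlock A c q *ᵥ v = μ • v := by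
  refine ⟨Sum.elim 0 k, fun h => hk (funext fun i => congrFun h (Sum.inr i)), ?_⟩
  rw [trsBlock_mulVec_elim, hqk, smul_sum_elim, eq_neg_of_add_eq_zero_left hAk]
  simp

lemma exists_eigvec_trsBlock_of_kkt (hA : A.IsSymm) {x : Fin n → K} (hx : c * (x ⬝ᵥ x) = 1)
    (hKKT : A *ᵥ x + q + μ • x = 0) : ∃ v ≠ 0, trsBlock A c q *ᵥ v = μ • v := by
  have hq : q = -((A + μ • 1) *ᵥ x) := by
    rw [add_mulVec, smul_mulVec, one_mulVec]; linear_combination (norm := module) hKKT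
  have hq_dot (z : Fin n → K) : q ⬝ᵥ z = -(x ⬝ᵥ ((A + μ • 1) *ᵥ z)) := by
    rw [hq, neg_dotProduct, dotProduct_comm, (hA.add (isSymm_one.smul μ)).dotProduct_mulVec_comm]
  by_cases hdet : (A + μ • 1).det = 0
  · obtain ⟨k, hk, hAk⟩ := exists_mulVec_eq_zero_iff.mpr hdet
    rw [add_mulVec, smul_mulVec, one_mulVec] at hAk
    refine exists_eigvec_trsBlock_of_ker hk hAk ?_
    rw [hq_dot, add_mulVec, smul_mulVec, one_mulVec, hAk, dotProduct_zero, neg_zero]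
  · obtain ⟨z, hz⟩ := mulVec_surjective_iff_isUnit.mpr
      ((isUnit_iff_isUnit_det _).mpr (Ne.isUnit hdet)) (-x)
    have hx0 : x ≠ 0 := by rintro rfl; simp at hx
    refine ⟨Sum.elim (-x) z,
      fun h => hx0 (neg_eq_zero.mp (funext fun i => congrFun h (Sum.inl i))), ?_⟩
    rw [add_mulVec, smul_mulVec, one_mulVec] at hz
    have hcqz : c * (q ⬝ᵥ z) = 1 := by
      rw [hq_dot, add_mulVec, smul_mulVec, one_mulVec, hz, dotProduct_neg, neg_neg, hx]
    rw [trsBlock_mulVec_elim, hcqz, one_smul, smul_sum_elim]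
    congr 1
    · rw [mulVec_neg, neg_neg]
      linear_combination (norm := module) hKKT
    · linear_combination (norm := module) -hz

lemma trsBlock_secular_of_eigvec (hA : A.IsSymm) {l : Fin n → K} {u : Fin n → Fin n → K}
    (heig : ∀ i, A *ᵥ u i = l i • u i) (hu : ∀ i j, u i ⬝ᵥ u j = if i = j then 1 else 0)
    (hne : ∀ i, l i + μ ≠ 0) {v : Fin n ⊕ Fin n → K} (hv : v ≠ 0)
    (hMv : trsBlock A c q *ᵥ v = μ • v) :
    c * ∑ i, (u i ⬝ᵥ q) ^ 2 / (l i + μ) ^ 2 = 1 := by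
  obtain ⟨y, z, rfl⟩ : ∃ y z, v = Sum.elim y z :=
    ⟨v ∘ Sum.inl, v ∘ Sum.inr, (Sum.elim_comp_inl_inr v).symm⟩
  set β := c * (q ⬝ᵥ z)
  rw [trsBlock_mulVec_elim, smul_sum_elim] at hMv
  have htop := congrArg (· ∘ Sum.inl) hMv
  have hbot := congrArg (· ∘ Sum.inr) hMv
  simp only [Sum.elim_comp_inl, Sum.elim_comp_inr] at htop hbot
  have hy (i : Fin n) : u i ⬝ᵥ y = (l i + μ) * (u i ⬝ᵥ z) := by
    have h := congrArg (u i ⬝ᵥ ·) hbot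
    simp only [dotProduct_sub, dotProduct_smul, smul_eq_mul,
      dotProduct_mulVec_of_eigen hA (heig i)] at h
    linear_combination h
  have hz (i : Fin n) : (l i + μ) ^ 2 * (u i ⬝ᵥ z) = β * (u i ⬝ᵥ q) := by
    have h := congrArg (u i ⬝ᵥ ·) htop
    simp only [dotProduct_add, dotProduct_neg, dotProduct_smul, smul_eq_mul,
      dotProduct_mulVec_of_eigen hA (heig i), hy i] at h
    linear_combination -h
  have hz0 : z ≠ 0 := by
    intro h0
    rw [h0, mulVec_zero, sub_zero, smul_zero] at hbot
    apply hv
    rw [hbot, h0, Sum.elim_zero_zero]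
  have hβ : β ≠ 0 := by
    intro h0
    refine hz0 (eq_of_orthonormal_coords hu fun i => ?_)
    rw [dotProduct_zero]
    simpa [h0, hne i] using hz i
  have hqz : q ⬝ᵥ z = β * ∑ i, (u i ⬝ᵥ q) ^ 2 / (l i + μ) ^ 2 := by
    rw [dotProduct_eq_sum_of_orthonormal hu, Finset.mul_sum]
    refine Finset.sum_congr rfl fun i _ => ?_
    rw [mul_div_assoc', eq_div_iff (pow_ne_zero 2 (hne i))]
    linear_combination (u i ⬝ᵥ q) * hz i
  refine mul_left_cancel₀ hβ ?_
  calc β * (c * ∑ i, (u i ⬝ᵥ q) ^ 2 / (l i + μ) ^ 2) = c * (q ⬝ᵥ z) := by rw [hqz]; ring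
    _ = β * 1 := (mul_one β).symm

end Block

section Complexification

variable {P : Matrix (Fin n) (Fin n) ℝ} {q : Fin n → ℝ} {r : ℝ}

lemma trsMC_eq : trsMC P q r = trsBlock (P.map ofReal) ((r : ℂ) ^ 2)⁻¹ (ofReal ∘ q) := by
  rw [trsMC, trsM, fromBlocks_map, trsBlock]
  congr 1
  · ext i j; simp
  · ext i j; simp [vecMulVec_apply]
  · ext i j; simp [one_apply, apply_ite ofReal]
  · ext i j; simp

lemma map_ofReal_mulVec {m : Type*} [Fintype m] (A : Matrix m m ℝ) (v : m → ℝ) :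
    A.map ofReal *ᵥ (ofReal ∘ v) = ofReal ∘ (A *ᵥ v) :=
  funext fun i => (RingHom.map_mulVec ofRealHom A v i).symm

lemma ofReal_comp_smul {m : Type*} (a : ℝ) (v : m → ℝ) :
    ofReal ∘ (a • v) = (a : ℂ) • (ofReal ∘ v) :=
  funext fun i => by simp

lemma isEig_trsMC_of_real {μ : ℝ} (h : ∃ v ≠ 0, trsM P q r *ᵥ v = μ • v) :
    IsEig (trsMC P q r) μ := by
  obtain ⟨v, hv, hMv⟩ := h
  refine ⟨ofReal ∘ v, fun h0 => hv (funext fun i => by simpa using congrFun h0 i), ?_⟩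
  rw [trsMC, map_ofReal_mulVec, hMv, ofReal_comp_smul]

lemma isEig_trsMC_of_kkt (hP : P.IsSymm) (hr : r ≠ 0) {x : Fin n → ℝ} {μ : ℝ}
    (hx : x ⬝ᵥ x = r ^ 2) (hKKT : P *ᵥ x + q + μ • x = 0) : IsEig (trsMC P q r) μ :=
  isEig_trsMC_of_real (exists_eigvec_trsBlock_of_kkt hP (by rw [hx]; field_simp) hKKT)

lemma isEig_trsMC_of_eigen_orthogonal {k : Fin n → ℝ} {l : ℝ} (hk : k ≠ 0) (hPk : P *ᵥ k = l • k)
    (hqk : q ⬝ᵥ k = 0) : IsEig (trsMC P q r) (-l : ℝ) :=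
  isEig_trsMC_of_real (exists_eigvec_trsBlock_of_ker hk (by rw [hPk, neg_smul, add_neg_cancel]) hqk)

lemma secular_eq_zero_of_isEig (hP : P.IsSymm) {lam : Fin n → ℝ} {w : Fin n → Fin n → ℝ}
    (heig : ∀ i, P *ᵥ w i = lam i • w i)
    (horth : ∀ i j, w i ⬝ᵥ w j = if i = j then (1 : ℝ) else 0) (hr : r ≠ 0) {μ : ℂ}
    (hne : ∀ i, (lam i : ℂ) + μ ≠ 0) (hμ : IsEig (trsMC P q r) μ) : secular lam w q r μ = 0 := by
  obtain ⟨v, hv, hMv⟩ := hμ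
  have hdot (u u' : Fin n → ℝ) : ofReal ∘ u ⬝ᵥ ofReal ∘ u' = ((u ⬝ᵥ u' : ℝ) : ℂ) :=
    (RingHom.map_dotProduct ofRealHom u u').symm
  have heigC (i : Fin n) : P.map ofReal *ᵥ (ofReal ∘ w i) = (lam i : ℂ) • (ofReal ∘ w i) := by
    rw [map_ofReal_mulVec, heig, ofReal_comp_smul]
  have horthC (i j : Fin n) : ofReal ∘ w i ⬝ᵥ ofReal ∘ w j = if i = j then 1 else 0 := by
    rw [hdot, horth]; split_ifs <;> simp
  rw [trsMC_eq] at hMv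
  have h := trsBlock_secular_of_eigvec (hP.map ofReal) heigC horthC hne hv hMv
  simp only [hdot] at h
  rw [secular, sub_eq_zero, ← div_eq_one_iff_eq (pow_ne_zero 2 (ofReal_ne_zero.mpr hr)),
    ← inv_mul_eq_div, h]

end Complexification

lemma norm_sum_sq_div_lt {ι : Type*} [Fintype ι] {b c : ι → ℝ} (hb : ∀ i, 0 ≤ b i) {δ : ℂ}
    (hδ : 0 < δ.re) (hc : c ≠ 0) :
    ‖∑ i, ((b i * c i : ℝ) : ℂ) ^ 2 / ((b i : ℂ) + δ) ^ 2‖ < ∑ i, c i ^ 2 := by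
  have hN (i : ι) : b i < ‖(b i : ℂ) + δ‖ := by
    have := re_le_norm ((b i : ℂ) + δ)
    rw [add_re, ofReal_re] at this
    linarith
  have hterm (i : ι) : ‖((b i * c i : ℝ) : ℂ) ^ 2 / ((b i : ℂ) + δ) ^ 2‖
      = b i ^ 2 * c i ^ 2 / ‖(b i : ℂ) + δ‖ ^ 2 := by
    rw [norm_div, norm_pow, norm_pow, norm_real, Real.norm_eq_abs, sq_abs, mul_pow]
  have hb2 (i : ι) : b i ^ 2 < ‖(b i : ℂ) + δ‖ ^ 2 := pow_lt_pow_left₀ (hN i) (hb i) two_ne_zero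
  have hNpos (i : ι) : 0 < ‖(b i : ℂ) + δ‖ ^ 2 := (sq_nonneg (b i)).trans_lt (hb2 i)
  obtain ⟨j, hj⟩ := Function.ne_iff.mp hc
  calc ‖∑ i, ((b i * c i : ℝ) : ℂ) ^ 2 / ((b i : ℂ) + δ) ^ 2‖
      ≤ ∑ i, ‖((b i * c i : ℝ) : ℂ) ^ 2 / ((b i : ℂ) + δ) ^ 2‖ := norm_sum_le _ _
    _ < ∑ i, c i ^ 2 := by
      refine Finset.sum_lt_sum (fun i _ => ?_) ⟨j, Finset.mem_univ j, ?_⟩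
      · rw [hterm, div_le_iff₀ (hNpos i), mul_comm]
        exact mul_le_mul_of_nonneg_left (hb2 i).le (sq_nonneg _)
      · rw [hterm, div_lt_iff₀ (hNpos j), mul_comm]
        exact mul_lt_mul_of_pos_left (hb2 j) (pow_pos (abs_pos.mpr hj) 2 |>.trans_eq (sq_abs _))

section Objective

variable {P : Matrix (Fin n) (Fin n) ℝ} {q x : Fin n → ℝ} {μ : ℝ}

lemma euclNorm_eq_iff {r : ℝ} (hr : 0 ≤ r) : euclNorm x = r ↔ x ⬝ᵥ x = r ^ 2 := by
  have hxx : 0 ≤ x ⬝ᵥ x := Finset.sum_nonneg fun i _ => mul_self_nonneg (x i)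
  rw [euclNorm, Real.sqrt_eq_iff_eq_sq hxx hr]

lemma qobj_sub_qobj_of_kkt (hP : P.IsSymm) (hKKT : P *ᵥ x + q + μ • x = 0) {y : Fin n → ℝ}
    (hy : y ⬝ᵥ y = x ⬝ᵥ x) :
    qobj P q y - qobj P q x = (1 / 2) * ((y - x) ⬝ᵥ (P *ᵥ (y - x)) + μ * ((y - x) ⬝ᵥ (y - x))) := by
  have hq : q = -(P *ᵥ x) - μ • x := by linear_combination (norm := module) hKKT
  subst hq
  simp only [qobj, mulVec_sub, dotProduct_sub, sub_dotProduct, neg_dotProduct,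
    smul_dotProduct, smul_eq_mul]
  rw [dotProduct_comm (P *ᵥ x) y, dotProduct_comm (P *ᵥ x) x, hP.dotProduct_mulVec_comm y x,
    dotProduct_comm y x, hy]
  ring

lemma quad_nonneg_of_dotProduct_ne_zero (hP : P.IsSymm) (hKKT : P *ᵥ x + q + μ • x = 0)
    (hmin : ∀ y, y ⬝ᵥ y = x ⬝ᵥ x → qobj P q x ≤ qobj P q y) {v : Fin n → ℝ} (hv : v ⬝ᵥ x ≠ 0) :
    0 ≤ v ⬝ᵥ (P *ᵥ v) + μ * (v ⬝ᵥ v) := by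
  have hvv : v ⬝ᵥ v ≠ 0 := by
    rintro h
    rw [dotProduct_self_eq_zero.mp h, zero_dotProduct] at hv
    exact hv rfl
  set t := 2 * (v ⬝ᵥ x) / (v ⬝ᵥ v)
  have ht : t ≠ 0 := div_ne_zero (mul_ne_zero two_ne_zero hv) hvv
  have hy : (x - t • v) ⬝ᵥ (x - t • v) = x ⬝ᵥ x := by
    simp only [dotProduct_sub, sub_dotProduct, dotProduct_smul, smul_dotProduct, smul_eq_mul]
    rw [dotProduct_comm x v]
    linear_combination t * (div_mul_cancel₀ (2 * (v ⬝ᵥ x)) hvv)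
  have h := qobj_sub_qobj_of_kkt hP hKKT hy
  rw [show x - t • v - x = (-t) • v by module, mulVec_smul] at h
  simp only [dotProduct_smul, smul_dotProduct, smul_eq_mul] at h
  have := sub_nonneg.mpr (hmin _ hy)
  nlinarith [sq_pos_of_ne_zero ht]

lemma quad_nonneg_of_forall_qobj_le (hP : P.IsSymm) (hKKT : P *ᵥ x + q + μ • x = 0)
    (hx : x ≠ 0) (hmin : ∀ y, y ⬝ᵥ y = x ⬝ᵥ x → qobj P q x ≤ qobj P q y) (v : Fin n → ℝ) :
    0 ≤ v ⬝ᵥ (P *ᵥ v) + μ * (v ⬝ᵥ v) := by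
  by_cases hv : v ⬝ᵥ x = 0
  · set Q : ℝ → ℝ := fun s => (v + s • x) ⬝ᵥ (P *ᵥ (v + s • x)) + μ * ((v + s • x) ⬝ᵥ (v + s • x))
    have hQ : Continuous Q := by fun_prop
    have hlim : Tendsto Q (𝓝[≠] 0) (𝓝 (Q 0)) :=
      hQ.continuousAt.tendsto.mono_left nhdsWithin_le_nhds
    have hpos : ∀ᶠ s in 𝓝[≠] 0, 0 ≤ Q s := by
      filter_upwards [self_mem_nhdsWithin] with s hs
      refine quad_nonneg_of_dotProduct_ne_zero hP hKKT hmin ?_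
      rw [add_dotProduct, hv, smul_dotProduct, smul_eq_mul, zero_add]
      exact mul_ne_zero hs (mt dotProduct_self_eq_zero.mp hx)
    simpa [Q] using ge_of_tendsto hlim hpos
  · exact quad_nonneg_of_dotProduct_ne_zero hP hKKT hmin hv

section Eigenbasis

variable {lam : Fin n → ℝ} {w : Fin n → Fin n → ℝ}

lemma quad_nonneg_of_eigen (hP : P.IsSymm) (heig : ∀ i, P *ᵥ w i = lam i • w i)
    (horth : ∀ i j, w i ⬝ᵥ w j = if i = j then (1 : ℝ) else 0) (hμ : ∀ i, 0 ≤ lam i + μ)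
    (v : Fin n → ℝ) : 0 ≤ v ⬝ᵥ (P *ᵥ v) + μ * (v ⬝ᵥ v) := by
  rw [dotProduct_eq_sum_of_orthonormal horth v (P *ᵥ v), dotProduct_eq_sum_of_orthonormal horth v v,
    Finset.mul_sum, ← Finset.sum_add_distrib]
  refine Finset.sum_nonneg fun i _ => ?_
  rw [dotProduct_mulVec_of_eigen hP (heig i)]
  nlinarith [mul_nonneg (hμ i) (mul_self_nonneg (w i ⬝ᵥ v))]

lemma kkt_eigen_coord (hP : P.IsSymm) (heig : ∀ i, P *ᵥ w i = lam i • w i)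
    (hKKT : P *ᵥ x + q + μ • x = 0) (i : Fin n) :
    (lam i + μ) * (w i ⬝ᵥ x) + w i ⬝ᵥ q = 0 := by
  have h := congrArg (w i ⬝ᵥ ·) hKKT
  simp only [dotProduct_add, dotProduct_smul, dotProduct_zero, smul_eq_mul,
    dotProduct_mulVec_of_eigen hP (heig i)] at h
  linear_combination h

lemma forall_qobj_le_iff (hP : P.IsSymm) (heig : ∀ i, P *ᵥ w i = lam i • w i)
    (horth : ∀ i j, w i ⬝ᵥ w j = if i = j then (1 : ℝ) else 0) {r : ℝ} (hr : 0 < r)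
    (hKKT : P *ᵥ x + q + μ • x = 0) (hx : x ⬝ᵥ x = r ^ 2) {i₀ : Fin n}
    (hi₀ : ∀ i, lam i₀ ≤ lam i) :
    (∀ y, euclNorm y = r → qobj P q x ≤ qobj P q y) ↔ -lam i₀ ≤ μ := by
  have hsphere (y : Fin n → ℝ) : euclNorm y = r ↔ y ⬝ᵥ y = x ⬝ᵥ x := by
    rw [euclNorm_eq_iff hr.le, hx]
  simp only [hsphere]
  constructor
  · intro hmin
    have hx0 : x ≠ 0 := by rintro rfl; simp at hx; exact (pow_pos hr 2).ne' hx.symm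
    have h := quad_nonneg_of_forall_qobj_le hP hKKT hx0 hmin (w i₀)
    rw [heig, dotProduct_smul, smul_eq_mul, horth, if_pos rfl] at h
    linarith
  · intro hμ y hy
    have h := quad_nonneg_of_eigen hP heig horth
      (fun i => show 0 ≤ lam i + μ by linarith [hi₀ i]) (y - x)
    linarith [qobj_sub_qobj_of_kkt hP hKKT hy]

lemma re_le_of_isEig (hP : P.IsSymm) (heig : ∀ i, P *ᵥ w i = lam i • w i)
    (horth : ∀ i j, w i ⬝ᵥ w j = if i = j then (1 : ℝ) else 0) {r : ℝ} (hr : 0 < r)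
    (hKKT : P *ᵥ x + q + μ • x = 0) (hx : x ⬝ᵥ x = r ^ 2) (hμ : ∀ i, 0 ≤ lam i + μ)
    {ν : ℂ} (hν : IsEig (trsMC P q r) ν) : ν.re ≤ μ := by
  by_contra! hlt
  have hδ : 0 < (ν - μ).re := by rw [sub_re, ofReal_re]; linarith
  have hne (i : Fin n) : (lam i : ℂ) + ν ≠ 0 := fun h0 => by
    have := congrArg re h0
    rw [add_re, ofReal_re, zero_re] at this
    linarith [hμ i]
  have hsec := secular_eq_zero_of_isEig hP heig horth hr.ne' hne hν
  have hterm (i : Fin n) : ((w i ⬝ᵥ q : ℝ) : ℂ) ^ 2 / ((lam i : ℂ) + ν) ^ 2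
      = (((lam i + μ) * (w i ⬝ᵥ x) : ℝ) : ℂ) ^ 2 / (((lam i + μ : ℝ) : ℂ) + (ν - μ)) ^ 2 := by
    rw [eq_neg_of_add_eq_zero_right (kkt_eigen_coord hP heig hKKT i)]
    push_cast
    ring
  rw [secular, sub_eq_zero, Finset.sum_congr rfl fun i _ => hterm i] at hsec
  have hsum : ∑ i, (w i ⬝ᵥ x) ^ 2 = r ^ 2 := by
    rw [← hx, dotProduct_eq_sum_of_orthonormal horth x x]
    simp only [sq]
  have hc : (fun i => w i ⬝ᵥ x) ≠ 0 := fun h0 => by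
    have : ∑ i, (w i ⬝ᵥ x) ^ 2 = 0 := by simp [congrFun h0]
    exact (pow_pos hr 2).ne' (hsum.symm.trans this)
  have := norm_sum_sq_div_lt hμ hδ hc
  rw [hsec, hsum, norm_pow, norm_real, Real.norm_eq_abs, abs_of_pos hr] at this
  exact lt_irrefl _ this

lemma exists_secularR_eq_zero {r : ℝ} (hr : 0 < r) {i₀ : Fin n} (hi₀ : ∀ i, lam i₀ ≤ lam i)
    (hq : w i₀ ⬝ᵥ q ≠ 0) : ∃ t, -lam i₀ < t ∧ secularR lam w q r t = 0 := by
  have hden (t : ℝ) (ht : -lam i₀ < t) (i : Fin n) : lam i + t ≠ 0 := by linarith [hi₀ i]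
  set t₀ := -lam i₀ + |w i₀ ⬝ᵥ q| / (2 * r)
  have ht₀ : -lam i₀ < t₀ := lt_add_of_pos_right _ (div_pos (abs_pos.mpr hq) (by positivity))
  -- at `t₀` the `i₀`-th term alone equals `4 r²`
  have hlow : 0 < secularR lam w q r t₀ := by
    have hterm : (w i₀ ⬝ᵥ q) ^ 2 / (lam i₀ + t₀) ^ 2 = 4 * r ^ 2 := by
      rw [show lam i₀ + t₀ = |w i₀ ⬝ᵥ q| / (2 * r) by ring, div_pow, sq_abs]
      field_simp
      ring
    have hle := Finset.single_le_sum (f := fun i => (w i ⬝ᵥ q) ^ 2 / (lam i + t₀) ^ 2)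
      (fun i _ => by positivity) (Finset.mem_univ i₀)
    rw [secularR]
    nlinarith [pow_pos hr 2]
  have hlim : Tendsto (secularR lam w q r) atTop (𝓝 (-r ^ 2)) := by
    have h := tendsto_finsetSum Finset.univ fun i _ =>
      (tendsto_const_nhds (x := (w i ⬝ᵥ q) ^ 2)).div_atTop ((tendsto_pow_atTop two_ne_zero).comp
        (tendsto_atTop_add_const_left _ (lam i) tendsto_id))
    show Tendsto (fun t => secularR lam w q r t) _ _
    simpa [secularR] using h.sub_const (r ^ 2)
  obtain ⟨t₁, hneg, ht₁⟩ := ((hlim.eventually (gt_mem_nhds (neg_neg_of_pos (pow_pos hr 2)))).and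
    (eventually_ge_atTop t₀)).exists
  have hcont : ContinuousOn (secularR lam w q r) (Set.Icc t₀ t₁) := by
    refine (continuousOn_finsetSum _ fun i _ => ?_).sub continuousOn_const
    exact continuousOn_const.div (by fun_prop) fun t ht =>
      pow_ne_zero 2 (hden t (ht₀.trans_le ht.1) i)
  obtain ⟨t, ht, h0⟩ := intermediate_value_Icc' ht₁ hcont ⟨hneg.le, hlow.le⟩
  exact ⟨t, ht₀.trans_le ht.1, h0⟩

lemma exists_kkt_of_secularR_eq_zero (hP : P.IsSymm) (heig : ∀ i, P *ᵥ w i = lam i • w i)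
    (horth : ∀ i j, w i ⬝ᵥ w j = if i = j then (1 : ℝ) else 0) {r t : ℝ}
    (ht : ∀ i, lam i + t ≠ 0) (hs : secularR lam w q r t = 0) :
    ∃ x, x ⬝ᵥ x = r ^ 2 ∧ P *ᵥ x + q + t • x = 0 := by
  obtain ⟨c, hc_def⟩ : ∃ c : Fin n → ℝ, ∀ i, c i = -(w i ⬝ᵥ q) / (lam i + t) := ⟨_, fun _ => rfl⟩
  have hc := dotProduct_transpose_mulVec_of_orthonormal horth c
  refine ⟨(Matrix.of w)ᵀ *ᵥ c, ?_, eq_of_orthonormal_coords horth fun i => ?_⟩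
  · rw [dotProduct_eq_sum_of_orthonormal horth, ← sub_eq_zero.mp hs]
    refine Finset.sum_congr rfl fun i _ => ?_
    rw [hc, hc_def, ← sq, div_pow, neg_sq]
  · rw [dotProduct_add, dotProduct_add, dotProduct_smul, dotProduct_mulVec_of_eigen hP (heig i),
      hc, hc_def, dotProduct_zero, smul_eq_mul]
    field_simp [ht i]
    ring

lemma exists_isEig_ge (hP : P.IsSymm) (heig : ∀ i, P *ᵥ w i = lam i • w i)
    (horth : ∀ i j, w i ⬝ᵥ w j = if i = j then (1 : ℝ) else 0) {r : ℝ} (hr : 0 < r)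
    {i₀ : Fin n} (hi₀ : ∀ i, lam i₀ ≤ lam i) :
    ∃ ν : ℝ, -lam i₀ ≤ ν ∧ IsEig (trsMC P q r) ν := by
  by_cases hq : w i₀ ⬝ᵥ q = 0
  · have hw : w i₀ ≠ 0 := fun h0 => by simpa [h0] using horth i₀ i₀
    exact ⟨-lam i₀, le_rfl,
      isEig_trsMC_of_eigen_orthogonal hw (heig i₀) ((dotProduct_comm _ _).trans hq)⟩
  · obtain ⟨t, ht, hs⟩ := exists_secularR_eq_zero hr hi₀ hq
    obtain ⟨x, hx, hKKT⟩ := exists_kkt_of_secularR_eq_zero hP heig horth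
      (fun i => by linarith [hi₀ i]) hs
    exact ⟨t, ht.le, isEig_trsMC_of_kkt hP hr.ne' hx hKKT⟩

end Eigenbasis

end Objective

end TrustRegion

open TrustRegion

/-- a KKT point `(x, μg)` of (T) is a global minimizer iff `μg` is the
rightmost eigenvalue of `M`; furthermore in that case `μg ∈ [-λ₁, ∞)`. -/
theorem stmt_1 {n : ℕ} (hn : 1 < n)
    (P : Matrix (Fin n) (Fin n) ℝ) (hP : P.IsSymm)
    (lam : Fin n → ℝ) (w : Fin n → Fin n → ℝ)
    (hmono : Monotone lam)
    (heig : ∀ i, P.mulVec (w i) = lam i • w i)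
    (horth : ∀ i j, w i ⬝ᵥ w j = if i = j then (1 : ℝ) else 0)
    (q : Fin n → ℝ) (r : ℝ) (hr : 0 < r)
    (x : Fin n → ℝ) (μg : ℝ)
    (hKKT : P.mulVec x + q + μg • x = 0)
    (hx : euclNorm x = r) :
    ((∀ y : Fin n → ℝ, euclNorm y = r → qobj P q x ≤ qobj P q y) ↔
      (IsEig (trsMC P q r) (μg : ℂ) ∧
        ∀ μ : ℂ, IsEig (trsMC P q r) μ → μ.re ≤ μg))
    ∧ ((∀ y : Fin n → ℝ, euclNorm y = r → qobj P q x ≤ qobj P q y) →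
        -(lam ⟨0, by omega⟩) ≤ μg) := by
  have hlam₀ : ∀ i, lam ⟨0, by omega⟩ ≤ lam i := fun i => hmono (Nat.zero_le i.val)
  have hx2 : x ⬝ᵥ x = r ^ 2 := (euclNorm_eq_iff hr.le).mp hx
  have hmin_iff := forall_qobj_le_iff hP heig horth hr hKKT hx2 hlam₀
  refine ⟨⟨fun hmin => ⟨isEig_trsMC_of_kkt hP hr.ne' hx2 hKKT, fun μ hμ => ?_⟩, ?_⟩, hmin_iff.mp⟩
  · exact re_le_of_isEig hP heig horth hr hKKT hx2
      (fun i => by linarith [hmin_iff.mp hmin, hlam₀ i]) hμ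
  · rintro ⟨-, hrightmost⟩
    obtain ⟨ν, hν, hνeig⟩ := exists_isEig_ge hP heig horth hr hlam₀
    have := hrightmost ν hνeig
    rw [ofReal_re] at this
    exact hmin_iff.mpr (hν.trans this)
end

section
/- The spectrum of M contains the Lagrange multiplier of every KKT point of the trust-region subproblem (T): if x ∈ ℝⁿ and μ ∈ ℝ satisfy Px + q + μx = 0 and ‖x‖₂ = r, then μ is an eigenvalue of M. -/
open Matrix Complex
open scoped Classical

/-! With `A = P + μ • 1` the KKT condition reads `A x = -q`, and `M (u, v) = μ (u, v)` amounts to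
`u = A v` and `A u = (qᵀv / r²) q`. Since `A` is symmetric, `qᵀv = -xᵀ A v` for every `v`.
If `A` is singular, `(0, b)` with `A b = 0` is an eigenvector, as then `qᵀb = 0`;
otherwise `(x, A⁻¹ x)` is one, as `qᵀ A⁻¹ x = -xᵀx = -r²`. -/

lemma Matrix.IsSymm.mulVec_dotProduct_comm {m R : Type*} [Fintype m] [CommSemiring R]
    {A : Matrix m m R} (hA : A.IsSymm) (a b : m → R) : A *ᵥ a ⬝ᵥ b = a ⬝ᵥ A *ᵥ b := by
  rw [dotProduct_mulVec, ← mulVec_transpose, hA.eq]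

lemma isEig_map_ofReal {m : Type*} [Fintype m] {A : Matrix m m ℝ} {μ : ℝ} {v : m → ℝ}
    (hv : v ≠ 0) (h : A *ᵥ v = μ • v) : IsEig (A.map ofReal) μ := by
  refine ⟨ofReal ∘ v, fun h0 => hv (funext fun i => by simpa using congrFun h0 i), ?_⟩
  ext i
  exact (RingHom.map_mulVec ofRealHom A v i).symm.trans (by simp [h])

lemma dotProduct_self_eq_sq_of_euclNorm_eq {n : ℕ} {x : Fin n → ℝ} {r : ℝ}
    (hx : euclNorm x = r) : x ⬝ᵥ x = r ^ 2 := by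
  rw [← hx, euclNorm, Real.sq_sqrt (by simpa using dotProduct_self_star_nonneg x)]

lemma trsM_mulVec_elim_eq_smul {n : ℕ} {P : Matrix (Fin n) (Fin n) ℝ} {q : Fin n → ℝ} {r μ : ℝ}
    {u v : Fin n → ℝ} (hv : (P + μ • 1) *ᵥ v = u)
    (hu : (P + μ • 1) *ᵥ u = ((r ^ 2)⁻¹ * (q ⬝ᵥ v)) • q) :
    trsM P q r *ᵥ Sum.elim u v = μ • Sum.elim u v := by
  rw [add_mulVec, smul_mulVec, one_mulVec] at hu hv
  have h_inl : -P *ᵥ u + ((r ^ 2)⁻¹ • vecMulVec q q) *ᵥ v = μ • u := by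
    rw [neg_mulVec, smul_mulVec, vecMulVec_mulVec, op_smul_eq_smul, smul_smul, ← hu]
    abel
  have h_inr : 1 *ᵥ u + -P *ᵥ v = μ • v := by
    rw [one_mulVec, neg_mulVec, ← hv]
    abel
  rw [trsM, fromBlocks_mulVec, Sum.elim_comp_inl, Sum.elim_comp_inr, h_inl, h_inr]
  ext (i | i) <;> rfl

theorem stmt_2_general {n : ℕ}
    (P : Matrix (Fin n) (Fin n) ℝ) (hP : P.IsSymm)
    (q : Fin n → ℝ) (r : ℝ) (hr : 0 < r)
    (x : Fin n → ℝ) (μ : ℝ)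
    (hKKT : P.mulVec x + q + μ • x = 0)
    (hx : euclNorm x = r) :
    IsEig (trsMC P q r) (μ : ℂ) := by
  set A := P + μ • (1 : Matrix (Fin n) (Fin n) ℝ)
  have hA : A.IsSymm := hP.add (isSymm_one.smul μ)
  have hAx : A *ᵥ x = -q := by
    rw [add_mulVec, smul_mulVec, one_mulVec, eq_neg_iff_add_eq_zero, ← hKKT]
    abel
  have hqA : ∀ v, q ⬝ᵥ v = -(x ⬝ᵥ A *ᵥ v) := fun v => by
    rw [← hA.mulVec_dotProduct_comm, hAx, neg_dotProduct, neg_neg]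
  by_cases hdet : A.det = 0
  · obtain ⟨b, hb0, hb⟩ := exists_mulVec_eq_zero_iff.2 hdet
    refine isEig_map_ofReal (v := Sum.elim 0 b) ?_ (trsM_mulVec_elim_eq_smul hb ?_)
    · exact fun h => hb0 (funext fun i => congrFun h (Sum.inr i))
    · simp [hqA, hb]
  · have hb : A *ᵥ (A⁻¹ *ᵥ x) = x := by
      rw [mulVec_mulVec, mul_nonsing_inv _ (isUnit_iff_ne_zero.2 hdet), one_mulVec]
    have hxx := dotProduct_self_eq_sq_of_euclNorm_eq hx
    have hx0 : x ≠ 0 := by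
      rintro rfl
      rw [zero_dotProduct] at hxx
      exact (pow_pos hr 2).ne hxx
    refine isEig_map_ofReal (v := Sum.elim x (A⁻¹ *ᵥ x)) ?_ (trsM_mulVec_elim_eq_smul hb ?_)
    · exact fun h => hx0 (funext fun i => congrFun h (Sum.inl i))
    · rw [hAx, hqA, hb, hxx, mul_neg,
        inv_mul_cancel₀ (by positivity), neg_one_smul]

/-- the spectrum of `M` contains the Lagrange multiplier of every KKT point
of the trust-region subproblem (T). -/
theorem stmt_2 {n : ℕ} (hn : 1 < n)
    (P : Matrix (Fin n) (Fin n) ℝ) (hP : P.IsSymm)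
    (q : Fin n → ℝ) (r : ℝ) (hr : 0 < r)
    (x : Fin n → ℝ) (μ : ℝ)
    (hKKT : P.mulVec x + q + μ • x = 0)
    (hx : euclNorm x = r) :
    IsEig (trsMC P q r) (μ : ℂ) :=
  stmt_2_general P hP q r hr x μ hKKT hx
end

section
/- Let a, b ∈ ℝ with b ≠ 0, suppose q ≠ 0, and suppose a is in the domain of s (i.e., a ≠ −λᵢ for every i with wᵢᵀq ≠ 0). Then Re(s(a + bi)) < s(a). -/
open Matrix Complex
open scoped Classical

/- Termwise: the real part of `c² / (d + bi)²` is `c² (d² - b²) / (d² + b²)²`, and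
`(d² + b²)² - (d² - b²) d² = 3 d² b² + b⁴ > 0`, so for `b ≠ 0` it lies strictly below `c² / d²`
whenever `c ≠ 0`. Since the `wᵢ` are orthonormal and `q ≠ 0`, some coefficient `wᵢᵀq` is
nonzero, and summing gives the strict inequality. -/

lemma exists_dotProduct_ne_zero_of_orthonormal {m R : Type*} [Fintype m] [DecidableEq m]
    [CommRing R] {w : m → m → R} (horth : ∀ i j, w i ⬝ᵥ w j = if i = j then 1 else 0)
    {q : m → R} (hq : q ≠ 0) : ∃ i, w i ⬝ᵥ q ≠ 0 := by
  by_contra! hwq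
  have hWWt : of w * (of w)ᵀ = 1 := by
    ext i j
    simpa [mul_apply, one_apply, dotProduct] using horth i j
  have hWq : of w *ᵥ q = 0 := funext hwq
  apply hq
  calc q = ((of w)ᵀ * of w) *ᵥ q := by rw [mul_eq_one_comm.mp hWWt, one_mulVec]
    _ = 0 := by rw [← mulVec_mulVec, hWq, mulVec_zero]

lemma re_sq_div_sq_add_mul_I (c d b : ℝ) :
    ((c : ℂ) ^ 2 / ((d : ℂ) + b * I) ^ 2).re = c ^ 2 * (d ^ 2 - b ^ 2) / (d ^ 2 + b ^ 2) ^ 2 := by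
  rw [div_re]
  simp only [pow_two, mul_re, ofReal_re, ofReal_im, mul_zero, sub_zero, add_re, I_re, I_im,
    mul_one, sub_self, add_zero, add_im, mul_im, zero_add, normSq_apply, zero_mul, zero_div]
  ring

lemma re_sq_div_sq_add_mul_I_lt {c d b : ℝ} (hc : c ≠ 0) (hd : d ≠ 0) (hb : b ≠ 0) :
    ((c : ℂ) ^ 2 / ((d : ℂ) + b * I) ^ 2).re < c ^ 2 / d ^ 2 := by
  rw [re_sq_div_sq_add_mul_I, div_lt_div_iff₀ (by positivity) (by positivity)]
  have hc2 : 0 < c ^ 2 := by positivity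
  have hd2 : 0 < d ^ 2 := by positivity
  have hb2 : 0 < b ^ 2 := by positivity
  nlinarith [mul_pos hc2 (mul_pos hd2 hb2), mul_pos hc2 (mul_pos hb2 hb2)]

lemma sum_re_sq_div_sq_add_mul_I_lt {ι : Type*} [Fintype ι] {c d : ι → ℝ} {b : ℝ} (hb : b ≠ 0)
    (hc : ∃ i, c i ≠ 0) (hd : ∀ i, c i ≠ 0 → d i ≠ 0) :
    ∑ i, ((c i : ℂ) ^ 2 / ((d i : ℂ) + b * I) ^ 2).re < ∑ i, c i ^ 2 / d i ^ 2 := by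
  refine Finset.sum_lt_sum (fun i _ => ?_) ?_
  · rcases eq_or_ne (c i) 0 with hci | hci
    · simp [hci]
    · exact (re_sq_div_sq_add_mul_I_lt hci (hd i hci) hb).le
  · obtain ⟨i, hci⟩ := hc
    exact ⟨i, Finset.mem_univ i, re_sq_div_sq_add_mul_I_lt hci (hd i hci) hb⟩

theorem stmt_4_general {n : ℕ}
    (lam : Fin n → ℝ) (w : Fin n → Fin n → ℝ)
    (horth : ∀ i j, w i ⬝ᵥ w j = if i = j then (1 : ℝ) else 0)
    (q : Fin n → ℝ) (r : ℝ)
    (hq : q ≠ 0)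
    (a b : ℝ) (hb : b ≠ 0)
    (ha : ∀ i, w i ⬝ᵥ q ≠ 0 → a ≠ -(lam i)) :
    (secular lam w q r ((a : ℂ) + (b : ℂ) * Complex.I)).re < secularR lam w q r a := by
  have hsum := sum_re_sq_div_sq_add_mul_I_lt (c := fun i => w i ⬝ᵥ q)
    (d := fun i => lam i + a) hb (exists_dotProduct_ne_zero_of_orthonormal horth hq)
    fun i hi hd => ha i hi (by linarith)
  have hr_sq : ((r : ℂ) ^ 2).re = r ^ 2 := by norm_cast
  rw [secular, secularR, sub_re, re_sum, hr_sq]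
  push_cast at hsum
  simp only [add_assoc] at hsum
  linarith

/-- if `q ≠ 0`, `b ≠ 0` and `a` is in the domain of `s`, then
`Re(s(a + bi)) < s(a)`. -/
theorem stmt_4 {n : ℕ} (hn : 0 < n)
    (P : Matrix (Fin n) (Fin n) ℝ) (hP : P.IsSymm)
    (lam : Fin n → ℝ) (w : Fin n → Fin n → ℝ)
    (hmono : Monotone lam)
    (heig : ∀ i, P.mulVec (w i) = lam i • w i)
    (horth : ∀ i j, w i ⬝ᵥ w j = if i = j then (1 : ℝ) else 0)
    (q : Fin n → ℝ) (r : ℝ) (hr : 0 < r)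
    (hq : q ≠ 0)
    (a b : ℝ) (hb : b ≠ 0)
    (ha : ∀ i, w i ⬝ᵥ q ≠ 0 → a ≠ -(lam i)) :
    (secular lam w q r ((a : ℂ) + (b : ℂ) * Complex.I)).re < secularR lam w q r a :=
  stmt_4_general lam w horth q r hq a b hb ha
end

section
/- If μ ∈ ℂ is not an eigenvalue of −P, then μ is an eigenvalue of M if and only if μ is a root of the secular function s, and in that case the algebraic multiplicity of μ as an eigenvalue of M equals its multiplicity as a root of s. -/
open Matrix Complex
open scoped Classical

section AuxLemmas
open Polynomial Filter

lemma eval_charpoly' {m : Type*} [Fintype m] [DecidableEq m] (A : Matrix m m ℂ) (z : ℂ) :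
    A.charpoly.eval z = (z • (1 : Matrix m m ℂ) - A).det := by
  rw [Matrix.charpoly, ← Polynomial.coe_evalRingHom, RingHom.map_det]
  congr 1
  ext i j
  by_cases h : i = j
  · subst h
    simp [Matrix.charmatrix_apply_eq, Matrix.one_apply]
  · simp [Matrix.charmatrix_apply_ne _ _ _ h, Matrix.one_apply, h]

lemma key {n : ℕ}
    (P : Matrix (Fin n) (Fin n) ℝ)
    (lam : Fin n → ℝ) (w : Fin n → Fin n → ℝ)
    (heig : ∀ i, P.mulVec (w i) = lam i • w i)
    (horth : ∀ i j, w i ⬝ᵥ w j = if i = j then (1 : ℝ) else 0)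
    (q : Fin n → ℝ) (r : ℝ) (hr : 0 < r)
    (z : ℂ) (hz : ∀ i, ((lam i : ℝ) : ℂ) + z ≠ 0) :
    (z • (1 : Matrix (Fin n ⊕ Fin n) (Fin n ⊕ Fin n) ℂ) - trsMC P q r).det
      = -(((r:ℂ)^2)⁻¹) * (∏ i, (((lam i : ℝ):ℂ) + z)^2) * secular lam w q r z := by
  set W : Matrix (Fin n) (Fin n) ℂ := Matrix.of fun i j => ((w i j : ℝ) : ℂ) with hW
  set PC : Matrix (Fin n) (Fin n) ℂ := P.map Complex.ofReal with hPCdef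
  set e : Fin n → ℂ := fun i => ((lam i : ℝ) : ℂ) + z with he
  set E : Matrix (Fin n) (Fin n) ℂ := Matrix.diagonal e with hE
  set c : Fin n → ℂ := fun i => ((w i ⬝ᵥ q : ℝ) : ℂ) with hc
  set qC : Fin n → ℂ := fun i => ((q i : ℝ) : ℂ) with hqC
  -- orthogonality
  have hWWT : W * Wᵀ = 1 := by
    ext i j
    have h1 : (W * Wᵀ) i j = ((w i ⬝ᵥ w j : ℝ) : ℂ) := by
      simp [Matrix.mul_apply, dotProduct, hW]
    rw [h1, horth i j]
    by_cases h : i = j <;> simp [h, Matrix.one_apply]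
  have hWTW : Wᵀ * W = 1 := mul_eq_one_comm.mp hWWT
  have hdetW : W.det * Wᵀ.det = 1 := by
    rw [← Matrix.det_mul, hWWT, Matrix.det_one]
  -- diagonalization
  have hPW : PC * Wᵀ = Wᵀ * Matrix.diagonal (fun i => ((lam i : ℝ) : ℂ)) := by
    ext i j
    rw [Matrix.mul_diagonal]
    have h2 : (PC * Wᵀ) i j = ((P.mulVec (w j) : Fin n → ℝ) i : ℂ) := by
      simp [Matrix.mul_apply, Matrix.mulVec, dotProduct, hW, hPCdef]
    rw [h2, heig j]
    simp [hW, mul_comm]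
  have hPC : PC = Wᵀ * Matrix.diagonal (fun i => ((lam i : ℝ) : ℂ)) * W := by
    rw [← hPW, Matrix.mul_assoc, hWTW, Matrix.mul_one]
  have hEsplit : E = Matrix.diagonal (fun i => ((lam i : ℝ) : ℂ)) + z • 1 := by
    ext i j
    by_cases h : i = j <;> simp [hE, he, Matrix.diagonal_apply, h, Matrix.one_apply]
  have hD : z • (1 : Matrix (Fin n) (Fin n) ℂ) + PC = Wᵀ * E * W := by
    rw [hEsplit, Matrix.mul_add, Matrix.add_mul, ← hPC,
      Matrix.mul_smul, Matrix.mul_one, Matrix.smul_mul, hWTW, add_comm]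
  -- determinant of D-block
  have hdetD : (z • (1 : Matrix (Fin n) (Fin n) ℂ) + PC).det = ∏ i, e i := by
    rw [hD, Matrix.det_mul, Matrix.det_mul, hE, Matrix.det_diagonal]
    have hdetW' : Wᵀ.det * W.det = 1 := by rw [← Matrix.det_mul, hWTW, Matrix.det_one]
    rw [mul_comm Wᵀ.det, mul_assoc, hdetW', mul_one]
  have hprodne : (∏ i, e i) ≠ 0 := Finset.prod_ne_zero_iff.mpr fun i _ => hz i
  haveI : Invertible (z • (1 : Matrix (Fin n) (Fin n) ℂ) + PC) :=
    Matrix.invertibleOfIsUnitDet _ (by rw [hdetD]; exact isUnit_iff_ne_zero.mpr hprodne)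
  -- block decomposition
  have hblocks : z • (1 : Matrix (Fin n ⊕ Fin n) (Fin n ⊕ Fin n) ℂ) - trsMC P q r
      = Matrix.fromBlocks (z • 1 + PC) (-(((r:ℂ)^2)⁻¹ • Matrix.vecMulVec qC qC)) (-1)
          (z • 1 + PC) := by
    rw [trsMC, trsM, Matrix.fromBlocks_map, sub_eq_add_neg, ← Matrix.fromBlocks_one,
      Matrix.fromBlocks_smul, Matrix.fromBlocks_neg, Matrix.fromBlocks_add]
    ext i j
    cases i <;> cases j <;>
      simp [Matrix.map_apply, Matrix.vecMulVec_apply, hqC, hPCdef, Matrix.one_apply,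
        Matrix.smul_apply, apply_ite] <;>
      push_cast <;> ring_nf
  rw [hblocks, Matrix.det_fromBlocks₂₂]
  -- the inverse of the D block
  set Einv : Matrix (Fin n) (Fin n) ℂ := Matrix.diagonal (fun i => (e i)⁻¹) with hEinv
  have hEEinv : E * Einv = 1 := by
    rw [hE, hEinv, Matrix.diagonal_mul_diagonal]
    convert Matrix.diagonal_one
    exact mul_inv_cancel₀ (hz _)
  have hEinvE : Einv * E = 1 := mul_eq_one_comm.mp hEEinv
  set DInv : Matrix (Fin n) (Fin n) ℂ := Wᵀ * Einv * W with hDInv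
  have hDDInv : (z • (1 : Matrix (Fin n) (Fin n) ℂ) + PC) * DInv = 1 := by
    rw [hD, hDInv]
    calc Wᵀ * E * W * (Wᵀ * Einv * W) = Wᵀ * E * (W * Wᵀ) * Einv * W := by
          simp only [Matrix.mul_assoc]
      _ = 1 := by rw [hWWT, Matrix.mul_one, Matrix.mul_assoc Wᵀ E Einv, hEEinv,
          Matrix.mul_one, hWTW]
  have hinvOf : ⅟(z • (1 : Matrix (Fin n) (Fin n) ℂ) + PC) = DInv := by
    rw [Matrix.invOf_eq_nonsing_inv]
    exact Matrix.inv_eq_right_inv hDDInv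
  rw [hinvOf]
  -- rank-one conjugation
  have hcW : W *ᵥ qC = c := by
    funext i
    simp only [Matrix.mulVec, dotProduct, hW, hqC, hc, Matrix.of_apply]
    push_cast
    rfl
  have hWVW : W * Matrix.vecMulVec qC qC * Wᵀ = Matrix.vecMulVec c c := by
    rw [Matrix.vecMulVec_eq Unit qC qC, Matrix.vecMulVec_eq Unit c c, ← hcW,
      Matrix.replicateCol_mulVec, ← Matrix.vecMul_transpose, Matrix.replicateRow_vecMul]
    simp only [Matrix.mul_assoc]
  have hvecc : Matrix.vecMulVec qC qC * Wᵀ = Wᵀ * Matrix.vecMulVec c c := by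
    rw [← hWVW]
    calc Matrix.vecMulVec qC qC * Wᵀ = (Wᵀ * W) * Matrix.vecMulVec qC qC * Wᵀ := by
          rw [hWTW, Matrix.one_mul]
      _ = Wᵀ * (W * Matrix.vecMulVec qC qC * Wᵀ) := by simp only [Matrix.mul_assoc]
  have hSchur : (z • (1 : Matrix (Fin n) (Fin n) ℂ) + PC)
        - -(((r:ℂ)^2)⁻¹ • Matrix.vecMulVec qC qC) * DInv * (-1)
      = Wᵀ * (E - ((r:ℂ)^2)⁻¹ • (Matrix.vecMulVec c c * Einv)) * W := by
    rw [Matrix.neg_mul, Matrix.mul_neg, Matrix.neg_mul, neg_neg, hDInv, hD]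
    rw [Matrix.smul_mul, ← Matrix.mul_assoc, ← Matrix.mul_assoc, hvecc]
    rw [Matrix.mul_sub, Matrix.sub_mul]
    congr 1
    rw [Matrix.mul_smul, Matrix.smul_mul, Matrix.smul_mul]
    simp only [Matrix.mul_assoc, Matrix.mul_one]
  rw [hSchur]
  have hdetconj : ∀ M : Matrix (Fin n) (Fin n) ℂ, (Wᵀ * M * W).det = M.det := by
    intro M
    rw [Matrix.det_mul, Matrix.det_mul, mul_comm Wᵀ.det M.det, mul_assoc,
      mul_comm Wᵀ.det W.det, hdetW, mul_one]
  rw [hdetconj]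
  -- compute the rank-one perturbed diagonal determinant
  set v : Fin n → ℂ := fun j => c j * (e j)⁻¹ with hv
  set u : Fin n → ℂ := fun i => (e i)⁻¹ * c i with hu
  have hvE : Matrix.vecMulVec c c * Einv = Matrix.vecMulVec c v := by
    ext i j
    rw [hEinv, Matrix.mul_diagonal]
    simp [Matrix.vecMulVec_apply, hv, mul_assoc]
  have hfact : E - ((r:ℂ)^2)⁻¹ • (Matrix.vecMulVec c c * Einv)
      = E * (1 - ((r:ℂ)^2)⁻¹ • Matrix.vecMulVec u v) := by
    rw [hvE, Matrix.mul_sub, Matrix.mul_one, Matrix.mul_smul]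
    congr 2
    ext i j
    rw [hE, Matrix.diagonal_mul]
    simp only [Matrix.vecMulVec_apply, hu, hv]
    field_simp
    exact (mul_div_mul_right _ _ (hz i)).symm
  have hrank1 : (1 - ((r:ℂ)^2)⁻¹ • Matrix.vecMulVec u v).det
      = 1 - ((r:ℂ)^2)⁻¹ * ∑ i, (c i)^2 * ((e i)⁻¹)^2 := by
    have h1 : (1 : Matrix (Fin n) (Fin n) ℂ) - ((r:ℂ)^2)⁻¹ • Matrix.vecMulVec u v
        = 1 + Matrix.replicateCol Unit (-(((r:ℂ)^2)⁻¹ • u)) * Matrix.replicateRow Unit v := by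
      rw [← Matrix.vecMulVec_eq Unit, sub_eq_add_neg]
      congr 1
      ext i j
      simp [Matrix.vecMulVec_apply, hu, hv]
      ring
    rw [h1, Matrix.det_one_add_replicateCol_mul_replicateRow]
    simp only [dotProduct, Pi.neg_apply, Pi.smul_apply, smul_eq_mul, hv, hu]
    rw [sub_eq_add_neg, Finset.mul_sum, ← Finset.sum_neg_distrib]
    congr 1
    apply Finset.sum_congr rfl
    intro i _
    ring
  have hdetE : E.det = ∏ i, e i := by rw [hE, Matrix.det_diagonal]
  rw [hdetD, hfact, Matrix.det_mul, hdetE, hrank1]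
  -- final algebra
  unfold secular
  have hrne : ((r:ℂ)^2) ≠ 0 := by
    have : (r:ℂ) ≠ 0 := Complex.ofReal_ne_zero.mpr (ne_of_gt hr)
    exact pow_ne_zero 2 this
  have hprodsq : (∏ i, e i) * (∏ i, e i) = ∏ i, (e i)^2 := by
    rw [← Finset.prod_mul_distrib]
    apply Finset.prod_congr rfl
    intro i _
    ring
  have hsum : ∀ i : Fin n, (c i)^2 * ((e i)⁻¹)^2
      = ((w i ⬝ᵥ q : ℝ) : ℂ)^2 / (((lam i : ℝ):ℂ) + z)^2 := by
    intro i
    rw [div_eq_mul_inv, inv_pow]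
  calc (∏ i, e i) * ((∏ i, e i) * (1 - ((r:ℂ)^2)⁻¹ * ∑ i, (c i)^2 * ((e i)⁻¹)^2))
      = (∏ i, (e i)^2) * (1 - ((r:ℂ)^2)⁻¹ * ∑ i, (c i)^2 * ((e i)⁻¹)^2) := by
        rw [← mul_assoc, hprodsq]
    _ = -(((r:ℂ)^2)⁻¹) * (∏ i, (e i)^2)
          * ((∑ i, (c i)^2 * ((e i)⁻¹)^2) - (r:ℂ)^2) := by
        linear_combination (-(∏ i, (e i)^2)) * mul_inv_cancel₀ hrne
    _ = -(((r:ℂ)^2)⁻¹) * (∏ i, (((lam i : ℝ):ℂ) + z)^2)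
          * ((∑ i, ((w i ⬝ᵥ q : ℝ) : ℂ)^2 / (((lam i : ℝ):ℂ) + z)^2) - (r:ℂ)^2) := by
        rw [Finset.sum_congr rfl (fun i _ => hsum i)]


end AuxLemmas

open Polynomial Filter in
/-- if `μ ∈ ℂ` is not an eigenvalue of `-P`, then `μ` is an eigenvalue of `M`
iff `μ` is a root of the secular function `s`, and in that case the algebraic
multiplicity of `μ` as an eigenvalue of `M` equals its multiplicity as a root of `s`. -/
theorem stmt_9 {n : ℕ} (hn : 1 < n)
    (P : Matrix (Fin n) (Fin n) ℝ) (hP : P.IsSymm)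
    (lam : Fin n → ℝ) (w : Fin n → Fin n → ℝ)
    (hmono : Monotone lam)
    (heig : ∀ i, P.mulVec (w i) = lam i • w i)
    (horth : ∀ i j, w i ⬝ᵥ w j = if i = j then (1 : ℝ) else 0)
    (q : Fin n → ℝ) (r : ℝ) (hr : 0 < r)
    (μ : ℂ)
    (hμ : ¬ IsEig ((-P).map Complex.ofReal) μ) :
    (IsEig (trsMC P q r) μ ↔ secular lam w q r μ = 0)
    ∧ (secular lam w q r μ = 0 →
        HasZeroOfOrder (secular lam w q r) μ
          (Polynomial.rootMultiplicity μ (trsMC P q r).charpoly)) := by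
  classical
  have hall : ∀ i, ((lam i : ℝ) : ℂ) + μ ≠ 0 := by
    intro i h
    apply hμ
    refine ⟨fun j => ((w i j : ℝ) : ℂ), ?_, ?_⟩
    · intro h0
      have h1 := horth i i
      rw [if_pos rfl] at h1
      have h2 : ∀ j, w i j = 0 := by
        intro j
        have h3 := congrFun h0 j
        rw [Pi.zero_apply] at h3
        exact_mod_cast h3
      simp [dotProduct, h2] at h1
    · funext j
      have hPw := congrFun (heig i) j
      simp only [Matrix.mulVec, dotProduct, Pi.smul_apply, smul_eq_mul] at hPw
      have hμi : μ = -((lam i : ℝ) : ℂ) := by linear_combination h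
      simp only [Matrix.mulVec, dotProduct, Matrix.map_apply, Matrix.neg_apply,
        Pi.smul_apply, smul_eq_mul, hμi]
      have hc : ∑ x, -(P j x) * w i x = -(lam i) * w i j := by
        simp only [neg_mul, Finset.sum_neg_distrib, hPw]
      calc ∑ x, ((-(P j x) : ℝ) : ℂ) * ((w i x : ℝ) : ℂ)
          = ((∑ x, -(P j x) * w i x : ℝ) : ℂ) := by push_cast; rfl
        _ = -((lam i : ℝ) : ℂ) * ((w i j : ℝ) : ℂ) := by rw [hc]; push_cast; rfl
  set p := (trsMC P q r).charpoly with hp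
  have hkey : ∀ z : ℂ, (∀ i, ((lam i : ℝ) : ℂ) + z ≠ 0) →
      p.eval z = -(((r:ℂ)^2)⁻¹) * (∏ i, (((lam i : ℝ):ℂ) + z)^2) * secular lam w q r z := by
    intro z hz
    rw [hp, eval_charpoly', key P lam w heig horth q r hr z hz]
  have hrne : ((r:ℂ)^2) ≠ 0 :=
    pow_ne_zero 2 (Complex.ofReal_ne_zero.mpr (ne_of_gt hr))
  have hprodμ : (∏ i, (((lam i : ℝ):ℂ) + μ)^2) ≠ 0 :=
    Finset.prod_ne_zero_iff.mpr fun i _ => pow_ne_zero 2 (hall i)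
  have hiff : p.eval μ = 0 ↔ secular lam w q r μ = 0 := by
    rw [hkey μ hall]
    constructor
    · intro h
      rcases mul_eq_zero.mp h with h1 | h1
      · rcases mul_eq_zero.mp h1 with h2 | h2
        · exact absurd h2 (neg_ne_zero.mpr (inv_ne_zero hrne))
        · exact absurd h2 hprodμ
      · exact h1
    · intro h
      rw [h, mul_zero]
  have hdet : IsEig (trsMC P q r) μ ↔ p.eval μ = 0 := by
    rw [hp, eval_charpoly']
    rw [← Matrix.exists_mulVec_eq_zero_iff]
    constructor
    · rintro ⟨v, hv, hev⟩
      exact ⟨v, hv, by rw [Matrix.sub_mulVec, Matrix.smul_mulVec,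
        Matrix.one_mulVec, hev, sub_self]⟩
    · rintro ⟨v, hv, hev⟩
      refine ⟨v, hv, ?_⟩
      rw [Matrix.sub_mulVec, Matrix.smul_mulVec, Matrix.one_mulVec, sub_eq_zero] at hev
      exact hev.symm
  constructor
  · exact hdet.trans hiff
  · intro hs
    have hproot : p.eval μ = 0 := hiff.mpr hs
    have hp0 : p ≠ 0 := (Matrix.charpoly_monic _).ne_zero
    set k := Polynomial.rootMultiplicity μ p with hk
    set gpoly := p /ₘ (X - C μ) ^ k with hgpoly
    have hdecomp : (X - C μ) ^ k * gpoly = p :=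
      Polynomial.pow_mul_divByMonic_rootMultiplicity_eq p μ
    have hgne : gpoly.eval μ ≠ 0 :=
      Polynomial.eval_divByMonic_pow_rootMultiplicity_ne_zero μ hp0
    set Ppoly : Polynomial ℂ := ∏ i, (C (((lam i : ℝ)) : ℂ) + X) ^ 2 with hPpoly
    have hPeval : ∀ u : ℂ, Ppoly.eval u = ∏ i, (((lam i : ℝ):ℂ) + u)^2 := by
      intro u
      simp [hPpoly, Polynomial.eval_prod]
    refine ⟨fun u => -(r:ℂ)^2 * gpoly.eval u / Ppoly.eval u, ?_, ?_, ?_⟩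
    · apply AnalyticAt.div
      · apply AnalyticAt.mul analyticAt_const
        simpa [Polynomial.coe_aeval_eq_eval] using
          (analyticAt_id (𝕜 := ℂ) (z := μ)).aeval_polynomial gpoly
      · simpa [Polynomial.coe_aeval_eq_eval] using
          (analyticAt_id (𝕜 := ℂ) (z := μ)).aeval_polynomial Ppoly
      · rw [hPeval]
        exact hprodμ
    · apply div_ne_zero
      · exact mul_ne_zero (neg_ne_zero.mpr hrne) hgne
      · rw [hPeval]
        exact hprodμ
    · have hev : ∀ᶠ u in nhds μ, ∀ i, ((lam i : ℝ):ℂ) + u ≠ 0 := by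
        rw [Filter.eventually_all]
        intro i
        have hne : μ ≠ -((lam i : ℝ):ℂ) := by
          intro h
          exact hall i (by rw [h]; ring)
        filter_upwards [eventually_ne_nhds hne] with u hu h0
        exact hu (by linear_combination h0)
      filter_upwards [hev] with u hu
      have h1 := hkey u hu
      have hprodu : (∏ i, (((lam i : ℝ):ℂ) + u)^2) ≠ 0 :=
        Finset.prod_ne_zero_iff.mpr fun i _ => pow_ne_zero 2 (hu i)
      have h2 : p.eval u = (u - μ)^k * gpoly.eval u := by
        conv_lhs => rw [← hdecomp]
        simp [Polynomial.eval_mul, Polynomial.eval_pow]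
      have h3 : secular lam w q r u
          = -(r:ℂ)^2 * p.eval u / (∏ i, (((lam i : ℝ):ℂ) + u)^2) := by
        rw [h1]
        field_simp
        exact (mul_div_cancel_right₀ _ (Complex.ofReal_ne_zero.mpr (ne_of_gt hr))).symm
      rw [h3, h2, hPeval]
      ring
end

section
/- For any eigenvalue λᵢ of P, the number −λᵢ is an eigenvalue of M if and only if there exists a nonzero vector x ∈ ℝⁿ with (P − λᵢI)x = 0 and qᵀx = 0, i.e., if and only if q is perpendicular to some nonzero null-vector of P − λᵢI. -/
open Matrix Complex
open scoped Classical

/-! Write an eigenvector of `M` for `-λ` as `(u, x)`, so that `(P - λ) x = u` and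
`(P - λ) u = (qᵀx / r²) q`. If `qᵀx = 0`, then `u` is a `λ`-eigenvector of `P` lying in the range
of the symmetric matrix `P - λ`, hence `u = 0`, and `x` itself is a `λ`-eigenvector orthogonal to
`q`. Otherwise `q` lies in the range of `P - λ`, hence is orthogonal to the eigenvector `wᵢ`.
Conversely `(0, x)` is an eigenvector of `M` whenever `x` is. -/

section RealEigenvectors

variable {l m : Type*} [Fintype m]

theorem re_map_ofReal_mulVec (A : Matrix l m ℝ) (v : m → ℂ) (k : l) :
    ((A.map ofReal *ᵥ v) k).re = (A *ᵥ fun j => (v j).re) k := by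
  simp [mulVec, dotProduct, re_sum]

theorem im_map_ofReal_mulVec (A : Matrix l m ℝ) (v : m → ℂ) (k : l) :
    ((A.map ofReal *ᵥ v) k).im = (A *ᵥ fun j => (v j).im) k := by
  simp [mulVec, dotProduct, im_sum]

/-- The real and imaginary parts of a complex eigenvector are real eigenvectors (or zero). -/
theorem isEig_map_ofReal_iff (A : Matrix m m ℝ) (μ : ℝ) :
    IsEig (A.map ofReal) μ ↔ ∃ v : m → ℝ, v ≠ 0 ∧ A *ᵥ v = μ • v := by
  constructor
  · rintro ⟨v, hv0, hv⟩
    have hre : A *ᵥ (fun j => (v j).re) = μ • fun j => (v j).re := by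
      funext k
      simpa [re_map_ofReal_mulVec] using congrArg re (congrFun hv k)
    have him : A *ᵥ (fun j => (v j).im) = μ • fun j => (v j).im := by
      funext k
      simpa [im_map_ofReal_mulVec] using congrArg im (congrFun hv k)
    by_cases hre0 : (fun j => (v j).re) = 0
    · refine ⟨_, fun him0 => hv0 ?_, him⟩
      funext j
      exact Complex.ext (congrFun hre0 j) (congrFun him0 j)
    · exact ⟨_, hre0, hre⟩
  · rintro ⟨v, hv0, hv⟩
    refine ⟨fun j => v j, fun h => hv0 (funext fun j => by simpa using congrFun h j), ?_⟩
    funext k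
    apply Complex.ext <;> simp [re_map_ofReal_mulVec, im_map_ofReal_mulVec, hv, ← Pi.zero_def]

end RealEigenvectors

namespace Matrix.IsSymm

variable {m R : Type*} [Fintype m] [CommRing R] {P : Matrix m m R}

theorem dotProduct_mulVec_comm_s11 (hP : P.IsSymm) (u x : m → R) :
    u ⬝ᵥ P *ᵥ x = P *ᵥ u ⬝ᵥ x := by
  rw [dotProduct_mulVec, ← mulVec_transpose, hP.eq]

theorem dotProduct_mulVec_sub_smul_eq_zero (hP : P.IsSymm) {μ : R} {w : m → R}
    (hw : P *ᵥ w = μ • w) (x : m → R) : w ⬝ᵥ (P *ᵥ x - μ • x) = 0 := by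
  rw [dotProduct_sub, hP.dotProduct_mulVec_comm_s11, hw, smul_dotProduct, dotProduct_smul, sub_self]

/-- A symmetric matrix has no Jordan chains of length two. -/
theorem eq_zero_of_mulVec_eq_smul_of_eq_mulVec_sub_smul [LinearOrder R] [IsStrictOrderedRing R]
    (hP : P.IsSymm) {μ : R} {u x : m → R} (hu : P *ᵥ u = μ • u) (hx : P *ᵥ x - μ • x = u) :
    u = 0 :=
  dotProduct_self_eq_zero.mp <| by
    simpa [hx] using hP.dotProduct_mulVec_sub_smul_eq_zero hu x

end Matrix.IsSymm

section BlockMatrix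

variable {n : ℕ}

theorem trsM_mulVec_sumElim (P : Matrix (Fin n) (Fin n) ℝ) (q : Fin n → ℝ) (r : ℝ)
    (u x : Fin n → ℝ) :
    trsM P q r *ᵥ Sum.elim u x =
      Sum.elim (((r ^ 2)⁻¹ * (q ⬝ᵥ x)) • q - P *ᵥ u) (u - P *ᵥ x) := by
  simp only [trsM, fromBlocks_mulVec, Sum.elim_comp_inl, Sum.elim_comp_inr, neg_mulVec,
    one_mulVec, smul_mulVec, vecMulVec_mulVec, op_smul_eq_smul, mul_smul]
  congr 1
  abel

theorem trsM_mulVec_sumElim_eq_neg_smul_iff (P : Matrix (Fin n) (Fin n) ℝ) (q : Fin n → ℝ)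
    (r μ : ℝ) (u x : Fin n → ℝ) :
    trsM P q r *ᵥ Sum.elim u x = (-μ) • Sum.elim u x ↔
      P *ᵥ x - μ • x = u ∧ P *ᵥ u - μ • u = ((r ^ 2)⁻¹ * (q ⬝ᵥ x)) • q := by
  simp only [trsM_mulVec_sumElim, funext_iff, Sum.forall, Pi.smul_apply, Pi.sub_apply,
    Sum.elim_inl, Sum.elim_inr, smul_eq_mul]
  rw [and_comm]
  refine and_congr (forall_congr' fun k => ?_) (forall_congr' fun k => ?_) <;>
    exact ⟨fun h => by linarith, fun h => by linarith⟩

end BlockMatrix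

theorem stmt_11_general {n : ℕ}
    (P : Matrix (Fin n) (Fin n) ℝ) (hP : P.IsSymm)
    (lam : Fin n → ℝ) (w : Fin n → Fin n → ℝ)
    (heig : ∀ i, P.mulVec (w i) = lam i • w i)
    (horth : ∀ i j, w i ⬝ᵥ w j = if i = j then (1 : ℝ) else 0)
    (q : Fin n → ℝ) (r : ℝ) (hr : 0 < r)
    (i : Fin n) :
    IsEig (trsMC P q r) (-((lam i : ℝ) : ℂ)) ↔
      ∃ x : Fin n → ℝ, x ≠ 0 ∧ P.mulVec x = lam i • x ∧ q ⬝ᵥ x = 0 := by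
  rw [← ofReal_neg, trsMC, isEig_map_ofReal_iff]
  constructor
  · rintro ⟨y, hy0, hy⟩
    obtain ⟨u, x, rfl⟩ : ∃ u x, y = Sum.elim u x := ⟨_, _, (Sum.elim_comp_inl_inr y).symm⟩
    obtain ⟨hx, hu⟩ := (trsM_mulVec_sumElim_eq_neg_smul_iff P q r (lam i) u x).mp hy
    by_cases hqx : q ⬝ᵥ x = 0
    · have hu0 : u = 0 := hP.eq_zero_of_mulVec_eq_smul_of_eq_mulVec_sub_smul
          (by simpa [hqx, sub_eq_zero] using hu) hx
      subst hu0
      refine ⟨x, fun hx0 => hy0 ?_, sub_eq_zero.mp hx, hqx⟩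
      simp [hx0]
    · refine ⟨w i, fun hw0 => by simpa [hw0] using horth i i, heig i, ?_⟩
      have hwq := hP.dotProduct_mulVec_sub_smul_eq_zero (heig i) u
      rw [hu, dotProduct_smul, smul_eq_mul] at hwq
      rw [dotProduct_comm]
      exact (mul_eq_zero.mp hwq).resolve_left (mul_ne_zero (by positivity) hqx)
  · rintro ⟨x, hx0, hPx, hqx⟩
    refine ⟨Sum.elim 0 x, fun h => hx0 (funext fun k => congrFun h (Sum.inr k)), ?_⟩
    rw [trsM_mulVec_sumElim_eq_neg_smul_iff]
    simp [hPx, hqx]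

/-- for any eigenvalue `λᵢ` of `P`, `-λᵢ` is an eigenvalue of `M` iff `q` is
perpendicular to some nonzero null-vector of `P - λᵢI`. -/
theorem stmt_11 {n : ℕ} (hn : 1 < n)
    (P : Matrix (Fin n) (Fin n) ℝ) (hP : P.IsSymm)
    (lam : Fin n → ℝ) (w : Fin n → Fin n → ℝ)
    (hmono : Monotone lam)
    (heig : ∀ i, P.mulVec (w i) = lam i • w i)
    (horth : ∀ i j, w i ⬝ᵥ w j = if i = j then (1 : ℝ) else 0)
    (q : Fin n → ℝ) (r : ℝ) (hr : 0 < r)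
    (i : Fin n) :
    IsEig (trsMC P q r) (-((lam i : ℝ) : ℂ)) ↔
      ∃ x : Fin n → ℝ, x ≠ 0 ∧ P.mulVec x = lam i • x ∧ q ⬝ᵥ x = 0 :=
  stmt_11_general P hP lam w heig horth q r hr i
end

section
/- Every non-simple eigenvalue of −P is also an eigenvalue of M: if λᵢ is an eigenvalue of P whose eigenspace has dimension at least 2, then −λᵢ is an eigenvalue of M. -/
open Matrix Complex
open scoped Classical

/-- every non-simple eigenvalue of `-P` is also an eigenvalue of `M`: if the
eigenspace of `P` for `λᵢ` has dimension at least 2, then `-λᵢ` is an eigenvalue of `M`. -/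
theorem stmt_12 {n : ℕ} (hn : 1 < n)
    (P : Matrix (Fin n) (Fin n) ℝ) (hP : P.IsSymm)
    (lam : Fin n → ℝ) (w : Fin n → Fin n → ℝ)
    (hmono : Monotone lam)
    (heig : ∀ i, P.mulVec (w i) = lam i • w i)
    (horth : ∀ i j, w i ⬝ᵥ w j = if i = j then (1 : ℝ) else 0)
    (q : Fin n → ℝ) (r : ℝ) (hr : 0 < r)
    (i : Fin n) (x y : Fin n → ℝ)
    (hx : P.mulVec x = lam i • x) (hy : P.mulVec y = lam i • y)
    (hli : LinearIndependent ℝ ![x, y]) :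
    IsEig (trsMC P q r) (-((lam i : ℝ) : ℂ)) := by
  obtain ⟨u, hu0, hqu, hPu⟩ :
      ∃ u : Fin n → ℝ, u ≠ 0 ∧ q ⬝ᵥ u = 0 ∧ P.mulVec u = lam i • u := by
    by_cases h : q ⬝ᵥ x = 0
    · exact ⟨x, hli.ne_zero 0, h, hx⟩
    · refine ⟨(q ⬝ᵥ y) • x - (q ⬝ᵥ x) • y, ?_, ?_, ?_⟩
      · intro h0
        have hsum : ∑ k, (![q ⬝ᵥ y, -(q ⬝ᵥ x)] : Fin 2 → ℝ) k • ![x, y] k = 0 := by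
          rw [Fin.sum_univ_two]
          simpa [neg_smul, ← sub_eq_add_neg] using h0
        have := Fintype.linearIndependent_iff.mp hli _ hsum 1
        simp only [Matrix.cons_val_one, Matrix.head_cons, Matrix.cons_val_zero, neg_eq_zero] at this
        exact h this
      · simp only [dotProduct_sub, dotProduct_smul, smul_eq_mul]
        ring
      · rw [Matrix.mulVec_sub, Matrix.mulVec_smul, Matrix.mulVec_smul, hx, hy,
          smul_sub, smul_comm, smul_comm (q ⬝ᵥ x)]
  set v : Fin n ⊕ Fin n → ℝ := Sum.elim (0 : Fin n → ℝ) u with hv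
  have key : (trsM P q r).mulVec v = (-(lam i)) • v := by
    have h1 : ((r ^ 2)⁻¹ • Matrix.vecMulVec q q).mulVec u = 0 := by
      funext k
      simp only [Matrix.mulVec, dotProduct, Matrix.smul_apply,
        Matrix.vecMulVec_apply, smul_eq_mul, Pi.zero_apply]
      calc ∑ l, (r ^ 2)⁻¹ * (q k * q l) * u l
          = ∑ l, (r ^ 2)⁻¹ * q k * (q l * u l) := by
            apply Finset.sum_congr rfl; intro l _; ring
        _ = (r ^ 2)⁻¹ * q k * (q ⬝ᵥ u) := by rw [← Finset.mul_sum]; rfl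
        _ = 0 := by rw [hqu, mul_zero]
    have e1 : v ∘ Sum.inl = 0 := rfl
    have e2 : v ∘ Sum.inr = u := rfl
    rw [trsM, Matrix.fromBlocks_mulVec, e1, e2, Matrix.mulVec_zero, Matrix.mulVec_zero, h1,
      Matrix.neg_mulVec, hPu]
    funext j
    cases j <;> simp [hv]
  refine ⟨fun j => ((v j : ℝ) : ℂ), ?_, ?_⟩
  · intro h0
    apply hu0
    funext j
    have := congrFun h0 (Sum.inr j)
    simpa [hv] using this
  · have hmap : (trsMC P q r).mulVec (fun j => ((v j : ℝ) : ℂ))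
        = fun j => (((trsM P q r).mulVec v) j : ℂ) := by
      funext j
      simp only [trsMC, Matrix.mulVec, dotProduct, Matrix.map_apply]
      push_cast
      rfl
    rw [hmap, key]
    funext j
    simp
end

section
/- If P is negative definite and n > 1, then M has at least two eigenvalues (counted with algebraic multiplicity) with positive real part. -/
open Matrix Complex
open scoped Classical

open Matrix Polynomial

namespace TRSAux

variable {m : Type*} [Fintype m] [DecidableEq m]

lemma eval_charpoly {R : Type*} [CommRing R] (M : Matrix m m R) (x : R) :
    M.charpoly.eval x = (x • (1 : Matrix m m R) - M).det := by
  unfold Matrix.charpoly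
  rw [show M.charmatrix.det.eval x = (evalRingHom x) M.charmatrix.det from rfl,
    RingHom.map_det]
  congr 1
  ext i j
  by_cases h : i = j
  · subst h
    simp [charmatrix_apply_eq, Matrix.one_apply]
  · simp [charmatrix_apply_ne _ _ _ h, Matrix.one_apply, h]

lemma dot_mulVec_symm {R : Type*} [CommRing R] {M : Matrix m m R} (hM : M.IsSymm)
    (v w : m → R) : v ⬝ᵥ M.mulVec w = w ⬝ᵥ M.mulVec v := by
  rw [Matrix.dotProduct_mulVec, ← Matrix.mulVec_transpose, hM.eq, dotProduct_comm]

lemma vecMulVec_mulVec' {R : Type*} [CommRing R] (w u v : m → R) :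
    (Matrix.vecMulVec w u).mulVec v = (u ⬝ᵥ v) • w := by
  funext i
  simp only [Matrix.mulVec, Matrix.vecMulVec_apply, dotProduct, Pi.smul_apply,
    smul_eq_mul, Finset.sum_mul]
  congr 1; funext j; ring

lemma mul_vecMulVec {R : Type*} [CommRing R] (M : Matrix m m R) (w v : m → R) :
    M * Matrix.vecMulVec w v = Matrix.vecMulVec (M.mulVec w) v := by
  ext i j
  simp [Matrix.mul_apply, Matrix.vecMulVec_apply, Matrix.mulVec, dotProduct,
    Finset.sum_mul, mul_assoc]

/-- determinant of `1 - vecMulVec u v`. -/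
lemma det_one_sub_vecMulVec {R : Type*} [CommRing R] (u v : m → R) :
    (1 - Matrix.vecMulVec u v).det = 1 - v ⬝ᵥ u := by
  have h : (1 : Matrix m m R) - Matrix.vecMulVec u v
      = 1 + Matrix.replicateCol Unit (-u) * Matrix.replicateRow Unit v := by
    rw [← Matrix.vecMulVec_eq Unit, sub_eq_add_neg]
    congr 1
    ext i j
    simp [Matrix.vecMulVec_apply]
  rw [h, Matrix.det_one_add_replicateCol_mul_replicateRow]
  simp only [dotProduct, Pi.neg_apply, mul_neg, Finset.sum_neg_distrib]
  ring

end TRSAux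


open Matrix Polynomial

namespace TRSAux

set_option linter.unusedSectionVars false

variable {m : Type*} [Fintype m]

/-- real part of a complex vector -/
def reV (w : m → ℂ) : m → ℝ := fun i => (w i).re
/-- imaginary part of a complex vector -/
def imV (w : m → ℂ) : m → ℝ := fun i => (w i).im

lemma eq_zero_of_parts {w : m → ℂ} (h1 : reV w = 0) (h2 : imV w = 0) : w = 0 := by
  funext i
  have := congrFun h1 i
  have := congrFun h2 i
  simp only [reV, imV, Pi.zero_apply] at *
  exact Complex.ext (by assumption) (by assumption)

lemma reV_mulVec_map (P : Matrix m m ℝ) (w : m → ℂ) :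
    reV ((P.map Complex.ofReal).mulVec w) = P.mulVec (reV w) := by
  funext i
  simp [reV, Matrix.mulVec, dotProduct, Matrix.map_apply, Complex.re_sum,
    Complex.mul_re]

lemma imV_mulVec_map (P : Matrix m m ℝ) (w : m → ℂ) :
    imV ((P.map Complex.ofReal).mulVec w) = P.mulVec (imV w) := by
  funext i
  simp [imV, Matrix.mulVec, dotProduct, Matrix.map_apply, Complex.im_sum,
    Complex.mul_im]

lemma reV_smul (z : ℂ) (w : m → ℂ) :
    reV (z • w) = z.re • reV w - z.im • imV w := by
  funext i; simp [reV, imV, Complex.mul_re]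

lemma imV_smul (z : ℂ) (w : m → ℂ) :
    imV (z • w) = z.re • imV w + z.im • reV w := by
  funext i; simp [reV, imV, Complex.mul_im, add_comm]

lemma reV_add (u w : m → ℂ) : reV (u + w) = reV u + reV w := by
  funext i; simp [reV]

lemma imV_add (u w : m → ℂ) : imV (u + w) = imV u + imV w := by
  funext i; simp [imV]

lemma dot_re (u w : m → ℂ) :
    (u ⬝ᵥ w).re = reV u ⬝ᵥ reV w - imV u ⬝ᵥ imV w := by
  simp [dotProduct, Complex.re_sum, Complex.mul_re, reV, imV,
    Finset.sum_sub_distrib]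

lemma dot_im (u w : m → ℂ) :
    (u ⬝ᵥ w).im = reV u ⬝ᵥ imV w + imV u ⬝ᵥ reV w := by
  simp [dotProduct, Complex.im_sum, Complex.mul_im, reV, imV,
    Finset.sum_add_distrib]

lemma reV_ofReal (q : m → ℝ) : reV (fun i => (q i : ℂ)) = q := by
  funext i; simp [reV]

lemma imV_ofReal (q : m → ℝ) : imV (fun i => (q i : ℂ)) = 0 := by
  funext i; simp [imV]

end TRSAux

namespace TRSAux

set_option linter.unusedSectionVars false
set_option maxHeartbeats 1000000

variable {n : ℕ} {P : Matrix (Fin n) (Fin n) ℝ} {q : Fin n → ℝ} {r : ℝ}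

section NegDef

variable (hP : P.IsSymm) (hneg : ∀ x : Fin n → ℝ, x ≠ 0 → x ⬝ᵥ P.mulVec x < 0)

lemma dot_self_nonneg (v : Fin n → ℝ) : 0 ≤ v ⬝ᵥ v :=
  Finset.sum_nonneg fun i _ => mul_self_nonneg (v i)

lemma dot_self_pos {v : Fin n → ℝ} (hv : v ≠ 0) : 0 < v ⬝ᵥ v :=
  lt_of_le_of_ne (dot_self_nonneg v)
    (fun h => hv ((dotProduct_self_eq_zero).mp h.symm))

include hneg in
lemma shift_negdef {x : ℝ} (hx : x ≤ 0) {v : Fin n → ℝ} (hv : v ≠ 0) :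
    v ⬝ᵥ (x • v + P.mulVec v) < 0 := by
  rw [dotProduct_add, dotProduct_smul]
  have h1 : x • (v ⬝ᵥ v) ≤ 0 := by
    rw [smul_eq_mul]
    exact mul_nonpos_of_nonpos_of_nonneg hx (dot_self_nonneg v)
  linarith [hneg v hv]

include hneg in
lemma shift_negdef' {x : ℝ} (hx : x ≤ 0) {v : Fin n → ℝ} (hv : v ≠ 0) :
    v ⬝ᵥ (x • (1 : Matrix (Fin n) (Fin n) ℝ) + P).mulVec v < 0 := by
  rw [Matrix.add_mulVec, Matrix.smul_mulVec, Matrix.one_mulVec]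
  exact shift_negdef hneg hx hv

include hneg in
lemma shift_nonpos {x : ℝ} (hx : x ≤ 0) (v : Fin n → ℝ) :
    v ⬝ᵥ (x • v + P.mulVec v) ≤ 0 := by
  by_cases hv : v = 0
  · subst hv; simp
  · exact le_of_lt (shift_negdef hneg hx hv)

include hP hneg in
/-- the complex shifted operator `w ↦ z•w + P w` kills no nonzero vector when `Re z ≤ 0`. -/
lemma L_ne_zero {z : ℂ} (hz : z.re ≤ 0) {w : Fin n → ℂ} (hw : w ≠ 0) :
    z • w + (P.map Complex.ofReal).mulVec w ≠ 0 := by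
  intro h
  set a := reV w with ha
  set b := imV w with hb
  have hre : z.re • a - z.im • b + P.mulVec a = 0 := by
    have := congrArg reV h
    rwa [reV_add, reV_smul, reV_mulVec_map] at this
  have him : z.re • b + z.im • a + P.mulVec b = 0 := by
    have := congrArg imV h
    rwa [imV_add, imV_smul, imV_mulVec_map] at this
  have key : a ⬝ᵥ (z.re • a + P.mulVec a) + b ⬝ᵥ (z.re • b + P.mulVec b) = 0 := by
    have e1 : a ⬝ᵥ (z.re • a - z.im • b + P.mulVec a) = 0 := by rw [hre]; simp
    have e2 : b ⬝ᵥ (z.re • b + z.im • a + P.mulVec b) = 0 := by rw [him]; simp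
    simp only [dotProduct_add, dotProduct_sub, dotProduct_smul, smul_eq_mul] at *
    have hc : a ⬝ᵥ b = b ⬝ᵥ a := dotProduct_comm a b
    rw [hc] at e1
    linarith [e1, e2]
  have hab : a ≠ 0 ∨ b ≠ 0 := by
    by_contra hc
    push_neg at hc
    exact hw (eq_zero_of_parts (by rw [← ha, hc.1]) (by rw [← hb, hc.2]))
  rcases hab with h' | h'
  · have := shift_negdef hneg hz h'
    have := shift_nonpos hneg hz b
    linarith
  · have := shift_negdef hneg hz h'
    have := shift_nonpos hneg hz a
    linarith

end NegDef

end TRSAux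

namespace TRSAux

variable {n : ℕ} {P : Matrix (Fin n) (Fin n) ℝ} {q : Fin n → ℝ} {r : ℝ}

lemma Pc_symm (hP : P.IsSymm) : (P.map Complex.ofReal).IsSymm := by
  unfold Matrix.IsSymm
  ext i j
  simp [Matrix.transpose_apply, Matrix.map_apply, hP.apply i j]

section KeyReal

variable (hP : P.IsSymm) (hr : 0 < r)
  (hneg : ∀ x : Fin n → ℝ, x ≠ 0 → x ⬝ᵥ P.mulVec x < 0)

include hP hr hneg in
lemma key_real {z : ℂ} (hz : z.re ≤ 0)
    (hdet : (z • (1 : Matrix (Fin n ⊕ Fin n) (Fin n ⊕ Fin n) ℂ) - trsMC P q r).det = 0) :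
    z.im = 0 ∧ ∃ a : Fin n → ℝ,
      (z.re • (1 : Matrix (Fin n) (Fin n) ℝ) + P).mulVec a = q ∧ a ⬝ᵥ a = r ^ 2 := by
  obtain ⟨V, hV0, hV⟩ := Matrix.exists_mulVec_eq_zero_iff.mpr hdet
  set Pc := P.map Complex.ofReal with hPc
  set qc : Fin n → ℂ := fun i => (q i : ℂ) with hqc
  set u : Fin n → ℂ := fun i => V (Sum.inl i) with hu
  set v : Fin n → ℂ := fun i => V (Sum.inr i) with hv'
  have hr2 : ((r : ℂ)) ^ 2 ≠ 0 :=
    pow_ne_zero 2 (Complex.ofReal_ne_zero.mpr (ne_of_gt hr))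
  have hVelim : V = Sum.elim u v := by funext i; cases i <;> rfl
  have hMC : trsMC P q r
      = Matrix.fromBlocks (-Pc) (((r : ℂ) ^ 2)⁻¹ • Matrix.vecMulVec qc qc) 1 (-Pc) := by
    unfold trsMC trsM
    ext i j
    rcases i with i | i <;> rcases j with j | j <;>
      simp [Matrix.map_apply, Matrix.vecMulVec_apply, Matrix.one_apply,
        apply_ite Complex.ofReal, hPc, hqc]
  have hMV : (trsMC P q r).mulVec V = z • V := by
    have h1 : (z • (1 : Matrix (Fin n ⊕ Fin n) (Fin n ⊕ Fin n) ℂ) - trsMC P q r).mulVec V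
        = z • V - (trsMC P q r).mulVec V := by
      rw [Matrix.sub_mulVec, Matrix.smul_mulVec, Matrix.one_mulVec]
    rw [h1] at hV
    exact (sub_eq_zero.mp hV).symm
  rw [hVelim, hMC, Matrix.fromBlocks_mulVec] at hMV
  set c : ℂ := ((r : ℂ) ^ 2)⁻¹ * (qc ⬝ᵥ v) with hc
  have hLv : z • v + Pc.mulVec v = u := by
    funext i
    have h := congrFun hMV (Sum.inr i)
    simp only [Sum.elim_comp_inl, Sum.elim_comp_inr, Sum.elim_inr, Pi.add_apply,
      Pi.smul_apply, Sum.elim_inl, Function.comp_apply, Matrix.one_mulVec,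
      Matrix.neg_mulVec, Pi.neg_apply, smul_eq_mul] at h ⊢
    linear_combination -h
  have hLu : z • u + Pc.mulVec u = c • qc := by
    funext i
    have h := congrFun hMV (Sum.inl i)
    rw [Matrix.neg_mulVec, Matrix.smul_mulVec, vecMulVec_mulVec'] at h
    simp only [Sum.elim_comp_inl, Sum.elim_comp_inr, Sum.elim_inl, Sum.elim_inr,
      Function.comp_apply, Pi.add_apply, Pi.neg_apply, Pi.smul_apply,
      smul_eq_mul, hc] at h ⊢
    linear_combination -h
  have hv0 : v ≠ 0 := by
    intro h
    apply hV0
    have hu0 : u = 0 := by rw [← hLv, h]; simp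
    rw [hVelim, h, hu0]
    funext i; cases i <;> rfl
  have hu0 : u ≠ 0 := by
    rw [← hLv]
    exact L_ne_zero hP hneg hz hv0
  have hc0 : c ≠ 0 := by
    intro h
    rw [h, zero_smul] at hLu
    exact L_ne_zero hP hneg hz hu0 hLu
  set w : Fin n → ℂ := c⁻¹ • u with hwdef
  have hLw : z • w + Pc.mulVec w = qc := by
    rw [hwdef, Matrix.mulVec_smul, smul_comm z c⁻¹ u, ← smul_add, hLu, smul_smul,
      inv_mul_cancel₀ hc0, one_smul]
  have hqcv : qc ⬝ᵥ v = c * (r : ℂ) ^ 2 := by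
    rw [hc, mul_comm, ← mul_assoc, mul_inv_cancel₀ hr2, one_mul]
  have huu : u ⬝ᵥ u = c * (c * (r : ℂ) ^ 2) := by
    have h1 : u ⬝ᵥ u = (z • v + Pc.mulVec v) ⬝ᵥ u := by rw [hLv]
    have h2 : (z • v + Pc.mulVec v) ⬝ᵥ u = v ⬝ᵥ (z • u + Pc.mulVec u) := by
      rw [add_dotProduct, dotProduct_add, smul_dotProduct,
        dotProduct_smul]
      congr 1
      rw [dotProduct_comm]
      exact dot_mulVec_symm (Pc_symm hP) u v
    rw [h1, h2, hLu, dotProduct_smul, smul_eq_mul, dotProduct_comm v qc, hqcv]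
  have hww : w ⬝ᵥ w = (r : ℂ) ^ 2 := by
    rw [hwdef, smul_dotProduct, dotProduct_smul, smul_eq_mul, smul_eq_mul,
      huu]
    field_simp
  -- now decompose into real and imaginary parts
  have hre : z.re • reV w - z.im • imV w + P.mulVec (reV w) = q := by
    have := congrArg reV hLw
    rwa [reV_add, reV_smul, hPc, reV_mulVec_map, reV_ofReal] at this
  have him : z.re • imV w + z.im • reV w + P.mulVec (imV w) = 0 := by
    have := congrArg imV hLw
    rwa [imV_add, imV_smul, hPc, imV_mulVec_map, imV_ofReal] at this
  have hdotre : reV w ⬝ᵥ reV w - imV w ⬝ᵥ imV w = r ^ 2 := by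
    have := congrArg Complex.re hww
    rwa [dot_re, ← Complex.ofReal_pow, Complex.ofReal_re] at this
  have hdotim : reV w ⬝ᵥ imV w = 0 := by
    have h2 := congrArg Complex.im hww
    rw [dot_im, ← Complex.ofReal_pow, Complex.ofReal_im] at h2
    have hcm : imV w ⬝ᵥ reV w = reV w ⬝ᵥ imV w := dotProduct_comm _ _
    rw [hcm] at h2
    linarith
  have hb0 : imV w = 0 := by
    by_contra hbne
    have h1 : imV w ⬝ᵥ (z.re • imV w + z.im • reV w + P.mulVec (imV w)) = 0 := by
      rw [him]; simp
    have hcm : imV w ⬝ᵥ reV w = reV w ⬝ᵥ imV w := dotProduct_comm _ _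
    rw [dotProduct_add, dotProduct_add, dotProduct_smul,
      dotProduct_smul, hcm, hdotim] at h1
    have h2 := shift_negdef hneg hz hbne
    rw [dotProduct_add, dotProduct_smul] at h2
    simp only [smul_eq_mul, mul_zero] at h1 h2
    linarith
  have ha0 : reV w ≠ 0 := by
    intro h
    rw [h, hb0] at hdotre
    simp only [zero_dotProduct] at hdotre
    nlinarith
  have him0 : z.im = 0 := by
    rw [hb0] at him
    simp only [smul_zero, Matrix.mulVec_zero, zero_add, add_zero] at him
    rcases smul_eq_zero.mp him with h | h
    · exact h
    · exact absurd h ha0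
  refine ⟨him0, reV w, ?_, ?_⟩
  · rw [Matrix.add_mulVec, Matrix.smul_mulVec, Matrix.one_mulVec]
    rw [hb0, him0] at hre
    simpa using hre
  · rw [hb0] at hdotre
    simpa using hdotre

end KeyReal

end TRSAux

namespace TRSAux

variable {n : ℕ} {P : Matrix (Fin n) (Fin n) ℝ} {q : Fin n → ℝ} {r : ℝ}

section Uniq

variable (hP : P.IsSymm) (hr : 0 < r)
  (hneg : ∀ x : Fin n → ℝ, x ≠ 0 → x ⬝ᵥ P.mulVec x < 0)

include hP hr hneg in
lemma key_uniq {x₁ x₂ : ℝ} (hx1 : x₁ ≤ 0) (hx2 : x₂ ≤ 0)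
    {a₁ a₂ : Fin n → ℝ}
    (h1 : (x₁ • (1 : Matrix (Fin n) (Fin n) ℝ) + P).mulVec a₁ = q)
    (h2 : (x₂ • (1 : Matrix (Fin n) (Fin n) ℝ) + P).mulVec a₂ = q)
    (hn1 : a₁ ⬝ᵥ a₁ = r ^ 2) (hn2 : a₂ ⬝ᵥ a₂ = r ^ 2) : x₁ = x₂ := by
  have e1 : x₁ • a₁ + P.mulVec a₁ = q := by
    rw [← h1, Matrix.add_mulVec, Matrix.smul_mulVec, Matrix.one_mulVec]
  have e2 : x₂ • a₂ + P.mulVec a₂ = q := by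
    rw [← h2, Matrix.add_mulVec, Matrix.smul_mulVec, Matrix.one_mulVec]
  have t11 : x₁ * (a₁ ⬝ᵥ a₁) + a₁ ⬝ᵥ P.mulVec a₁ = a₁ ⬝ᵥ q := by
    rw [← e1, dotProduct_add, dotProduct_smul, smul_eq_mul]
  have t21 : x₁ * (a₂ ⬝ᵥ a₁) + a₂ ⬝ᵥ P.mulVec a₁ = a₂ ⬝ᵥ q := by
    rw [← e1, dotProduct_add, dotProduct_smul, smul_eq_mul]
  have t12 : x₂ * (a₁ ⬝ᵥ a₂) + a₁ ⬝ᵥ P.mulVec a₂ = a₁ ⬝ᵥ q := by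
    rw [← e2, dotProduct_add, dotProduct_smul, smul_eq_mul]
  have t22 : x₂ * (a₂ ⬝ᵥ a₂) + a₂ ⬝ᵥ P.mulVec a₂ = a₂ ⬝ᵥ q := by
    rw [← e2, dotProduct_add, dotProduct_smul, smul_eq_mul]
  have hsymm : a₂ ⬝ᵥ a₁ = a₁ ⬝ᵥ a₂ := dotProduct_comm _ _
  have hsymP : a₂ ⬝ᵥ P.mulVec a₁ = a₁ ⬝ᵥ P.mulVec a₂ := dot_mulVec_symm hP a₂ a₁
  set d : Fin n → ℝ := a₁ - a₂ with hd
  have hdd : d ⬝ᵥ d = 2 * r ^ 2 - 2 * (a₁ ⬝ᵥ a₂) := by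
    rw [hd, sub_dotProduct, dotProduct_sub, dotProduct_sub,
      hsymm, hn1, hn2]
    ring
  have hdPd : d ⬝ᵥ P.mulVec d
      = a₁ ⬝ᵥ P.mulVec a₁ - 2 * (a₁ ⬝ᵥ P.mulVec a₂) + a₂ ⬝ᵥ P.mulVec a₂ := by
    rw [hd, Matrix.mulVec_sub, sub_dotProduct, dotProduct_sub,
      dotProduct_sub, hsymP]
    ring
  have key : d ⬝ᵥ (x₁ • d + P.mulVec d) + d ⬝ᵥ (x₂ • d + P.mulVec d) = 0 := by
    rw [dotProduct_add, dotProduct_add, dotProduct_smul,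
      dotProduct_smul, smul_eq_mul, smul_eq_mul, hdd, hdPd]
    rw [hsymm] at t21
    nlinarith [t11, t21, t12, t22]
  have hd0 : d = 0 := by
    by_contra hdne
    have k1 := shift_negdef hneg hx1 hdne
    have k2 := shift_nonpos hneg hx2 d
    linarith
  have haeq : a₁ = a₂ := by rwa [sub_eq_zero] at hd0
  have ha1 : a₁ ≠ 0 := by
    intro h
    rw [h] at hn1
    simp only [zero_dotProduct] at hn1
    nlinarith
  have : (x₁ - x₂) • a₁ = 0 := by
    have := congrArg₂ (fun u v : Fin n → ℝ => u - v) e1 e2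
    simp only [haeq] at this ⊢
    funext i
    have h := congrFun this i
    simp only [Pi.sub_apply, Pi.add_apply, Pi.smul_apply, smul_eq_mul, sub_self,
      Pi.zero_apply] at h ⊢
    linarith [h]
  rcases smul_eq_zero.mp this with h | h
  · linarith [h]
  · exact absurd (haeq ▸ h) ha1

end Uniq

end TRSAux

namespace TRSAux

variable {n : ℕ} {P : Matrix (Fin n) (Fin n) ℝ} {q : Fin n → ℝ} {r : ℝ}

section DetShift

variable (hP : P.IsSymm) (hr : 0 < r)

lemma vecMulVec_smul_left {m : Type*} [Fintype m] {R : Type*} [CommRing R]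
    (c : R) (u v : m → R) :
    c • Matrix.vecMulVec u v = Matrix.vecMulVec (c • u) v := by
  ext i j; simp [Matrix.vecMulVec_apply, mul_assoc]

lemma Bsymm (x : ℝ) (hP : P.IsSymm) :
    (x • (1 : Matrix (Fin n) (Fin n) ℝ) + P).IsSymm := by
  unfold Matrix.IsSymm
  rw [Matrix.transpose_add, Matrix.transpose_smul, Matrix.transpose_one, hP.eq]

lemma invOf_symm (B : Matrix (Fin n) (Fin n) ℝ) [Invertible B] (hB : B.IsSymm) :
    (⅟B).IsSymm := by
  unfold Matrix.IsSymm
  rw [Matrix.invOf_eq_nonsing_inv, Matrix.transpose_nonsing_inv, hB.eq]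

include hP hr in
lemma det_shift (x : ℝ)
    (hdx : IsUnit (x • (1 : Matrix (Fin n) (Fin n) ℝ) + P).det) :
    ((x • (1 : Matrix (Fin n ⊕ Fin n) (Fin n ⊕ Fin n) ℝ)) - trsM P q r).det * r ^ 2
      = (x • (1 : Matrix (Fin n) (Fin n) ℝ) + P).det ^ 2 * r ^ 2
        - ((x • (1 : Matrix (Fin n) (Fin n) ℝ) + P).adjugate.mulVec q)
          ⬝ᵥ ((x • (1 : Matrix (Fin n) (Fin n) ℝ) + P).adjugate.mulVec q) := by
  set B : Matrix (Fin n) (Fin n) ℝ := x • 1 + P with hB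
  haveI : Invertible B := B.invertibleOfIsUnitDet hdx
  haveI : Invertible (B * B) := invertibleMul B B
  have hr2 : r ^ 2 ≠ 0 := pow_ne_zero 2 (ne_of_gt hr)
  have hBsy : B.IsSymm := Bsymm x hP
  set C₀ : Matrix (Fin n) (Fin n) ℝ := (r ^ 2)⁻¹ • Matrix.vecMulVec q q with hC0
  -- block structure
  have step1 : (x • (1 : Matrix (Fin n ⊕ Fin n) (Fin n ⊕ Fin n) ℝ)) - trsM P q r
      = Matrix.fromBlocks B (-C₀) (-1) B := by
    unfold trsM
    ext i j
    rcases i with i | i <;> rcases j with j | j <;>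
      simp [Matrix.one_apply, Matrix.vecMulVec_apply, hB, hC0, Matrix.fromBlocks,
        Sum.elim_inl, Sum.elim_inr, apply_ite]
  have step2 : ((x • (1 : Matrix (Fin n ⊕ Fin n) (Fin n ⊕ Fin n) ℝ)) - trsM P q r).det
      = B.det * (B - C₀ * ⅟B).det := by
    rw [step1, Matrix.det_fromBlocks₂₂]
    congr 2
    rw [Matrix.neg_mul, Matrix.mul_neg, Matrix.neg_mul, neg_neg, Matrix.mul_one]
  have step3 : (B - C₀ * ⅟B).det * B.det = (B * B - C₀).det := by
    rw [← Matrix.det_mul]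
    congr 1
    rw [Matrix.sub_mul, Matrix.mul_assoc, invOf_mul_self, Matrix.mul_one]
  -- rank one update
  set w : Fin n → ℝ := (⅟B).mulVec q with hw
  have step4 : (B * B - C₀).det = B.det ^ 2 * (1 - (r ^ 2)⁻¹ * (w ⬝ᵥ w)) := by
    have h1 : B * B - C₀ = (B * B) * (1 - ⅟(B * B) * C₀) := by
      rw [Matrix.mul_sub, Matrix.mul_one, ← Matrix.mul_assoc, mul_invOf_self,
        Matrix.one_mul]
    have h2 : ⅟(B * B) * C₀ = Matrix.vecMulVec ((r ^ 2)⁻¹ • (⅟(B * B)).mulVec q) q := by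
      rw [hC0, Matrix.mul_smul, mul_vecMulVec, vecMulVec_smul_left]
    have h3 : (1 - ⅟(B * B) * C₀).det = 1 - (r ^ 2)⁻¹ * (q ⬝ᵥ (⅟(B * B)).mulVec q) := by
      rw [h2, det_one_sub_vecMulVec, dotProduct_smul, smul_eq_mul]
    have h4 : q ⬝ᵥ (⅟(B * B)).mulVec q = w ⬝ᵥ w := by
      have hBB : ⅟(B * B) = ⅟B * ⅟B := by
        rw [invOf_mul]
      rw [hBB, ← Matrix.mulVec_mulVec, ← hw]
      rw [dot_mulVec_symm (invOf_symm B hBsy) q w, ← hw]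
    rw [h1, Matrix.det_mul, Matrix.det_mul, h3, h4]
    ring
  -- adjugate vector
  have step5 : B.adjugate.mulVec q = B.det • w := by
    have h1 : B.adjugate = ⅟B * (B.det • (1 : Matrix (Fin n) (Fin n) ℝ)) := by
      rw [← Matrix.mul_adjugate, ← Matrix.mul_assoc, invOf_mul_self, Matrix.one_mul]
    rw [h1, ← Matrix.mulVec_mulVec]
    rw [show (B.det • (1 : Matrix (Fin n) (Fin n) ℝ)).mulVec q = B.det • q by
      rw [Matrix.smul_mulVec, Matrix.one_mulVec]]
    rw [Matrix.mulVec_smul, hw]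
  have hcancel : ((x • (1 : Matrix (Fin n ⊕ Fin n) (Fin n ⊕ Fin n) ℝ)) - trsM P q r).det
      = (B * B - C₀).det := by
    have := step3
    have h5 : ((x • (1 : Matrix (Fin n ⊕ Fin n) (Fin n ⊕ Fin n) ℝ)) - trsM P q r).det * B.det
        = (B * B - C₀).det * B.det := by
      rw [step2]
      rw [← step3]
      ring
    exact mul_right_cancel₀ hdx.ne_zero h5
  rw [hcancel, step4, step5, smul_dotProduct, dotProduct_smul,
    smul_eq_mul, smul_eq_mul]
  field_simp

end DetShift

end TRSAux

namespace TRSAux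

open Polynomial

noncomputable section

variable {n : ℕ}

/-- the polynomial matrix `X•1 + P` -/
def Bpoly (P : Matrix (Fin n) (Fin n) ℝ) : Matrix (Fin n) (Fin n) ℝ[X] :=
  (Polynomial.X : ℝ[X]) • (1 : Matrix (Fin n) (Fin n) ℝ[X]) + P.map Polynomial.C

def Dpoly (P : Matrix (Fin n) (Fin n) ℝ) : ℝ[X] := (Bpoly P).det

def vPoly (P : Matrix (Fin n) (Fin n) ℝ) (q : Fin n → ℝ) : Fin n → ℝ[X] :=
  (Bpoly P).adjugate.mulVec (fun i => Polynomial.C (q i))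

end

variable {n : ℕ} {P : Matrix (Fin n) (Fin n) ℝ} {q : Fin n → ℝ} {r : ℝ}

lemma Bpoly_map (x : ℝ) :
    (Bpoly P).map (evalRingHom x) = x • (1 : Matrix (Fin n) (Fin n) ℝ) + P := by
  ext i j
  by_cases h : i = j <;>
    simp [Bpoly, Matrix.map_apply, Matrix.add_apply, Matrix.smul_apply, smul_eq_mul,
      Matrix.one_apply, h]

lemma Dpoly_eval (x : ℝ) :
    (Dpoly P).eval x = (x • (1 : Matrix (Fin n) (Fin n) ℝ) + P).det := by
  have h : (Dpoly P).eval x = (evalRingHom x) (Bpoly P).det := rfl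
  rw [h, RingHom.map_det, ← Bpoly_map x]
  rfl

lemma vPoly_eval (x : ℝ) (i : Fin n) :
    (vPoly P q i).eval x
      = ((x • (1 : Matrix (Fin n) (Fin n) ℝ) + P).adjugate.mulVec q) i := by
  have hadj : ((Bpoly P).adjugate).map (evalRingHom x)
      = (x • (1 : Matrix (Fin n) (Fin n) ℝ) + P).adjugate := by
    rw [show ((Bpoly P).adjugate).map (evalRingHom x)
        = (evalRingHom x).mapMatrix (Bpoly P).adjugate from rfl,
      RingHom.map_adjugate, RingHom.mapMatrix_apply, Bpoly_map]
  rw [← hadj]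
  simp [vPoly, Matrix.mulVec, dotProduct, Polynomial.eval_finset_sum,
    Matrix.map_apply]

lemma dot_eval (u v : Fin n → ℝ[X]) (x : ℝ) :
    (u ⬝ᵥ v).eval x = (fun i => (u i).eval x) ⬝ᵥ (fun i => (v i).eval x) := by
  simp [dotProduct, Polynomial.eval_finset_sum]

lemma Dpoly_ne : (Dpoly P) ≠ 0 := by
  have h : Bpoly P = (-P).charmatrix := by
    ext i j
    by_cases h : i = j
    · subst h
      rw [Matrix.charmatrix_apply_eq]
      simp [Bpoly, Matrix.add_apply, Matrix.smul_apply, Matrix.one_apply, smul_eq_mul,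
        Matrix.map_apply, sub_eq_add_neg]
    · rw [Matrix.charmatrix_apply_ne _ _ _ h]
      simp [Bpoly, Matrix.add_apply, Matrix.smul_apply, Matrix.one_apply, smul_eq_mul,
        Matrix.map_apply, h]
  have : Dpoly P = (-P).charpoly := by rw [Dpoly, h]; rfl
  rw [this]
  exact ((-P).charpoly_monic).ne_zero

section Identity

variable (hP : P.IsSymm) (hr : 0 < r)

include hP hr in
lemma poly_identity :
    Polynomial.C (r ^ 2) * (trsM P q r).charpoly
      = Polynomial.C (r ^ 2) * (Dpoly P) ^ 2 - (vPoly P q ⬝ᵥ vPoly P q) := by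
  apply Polynomial.eq_of_infinite_eval_eq
  have hinf : {x : ℝ | (Dpoly P).eval x ≠ 0}.Infinite := by
    have hfin : {x : ℝ | (Dpoly P).IsRoot x}.Finite :=
      Polynomial.finite_setOf_isRoot Dpoly_ne
    have : {x : ℝ | (Dpoly P).eval x ≠ 0} = {x : ℝ | (Dpoly P).IsRoot x}ᶜ := by
      ext y; simp [Polynomial.IsRoot]
    rw [this]
    exact hfin.infinite_compl
  apply Set.Infinite.mono _ hinf
  intro x hx
  simp only [Set.mem_setOf_eq] at hx ⊢
  have hdx : IsUnit (x • (1 : Matrix (Fin n) (Fin n) ℝ) + P).det := by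
    rw [← Dpoly_eval x]
    exact isUnit_iff_ne_zero.mpr hx
  have hds := det_shift (q := q) hP hr x hdx
  simp only [Polynomial.eval_mul, Polynomial.eval_sub, Polynomial.eval_pow,
    Polynomial.eval_C]
  rw [eval_charpoly, Dpoly_eval, dot_eval]
  have hv : (fun i => (vPoly P q i).eval x)
      = (x • (1 : Matrix (Fin n) (Fin n) ℝ) + P).adjugate.mulVec q := by
    funext i; exact vPoly_eval x i
  rw [hv]
  linarith [hds]

end Identity

end TRSAux

namespace TRSAux

open Polynomial

variable {n : ℕ} {P : Matrix (Fin n) (Fin n) ℝ} {q : Fin n → ℝ} {r : ℝ}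

lemma dBpoly (i j : Fin n) :
    Polynomial.derivative (Bpoly P i j) = (1 : Matrix (Fin n) (Fin n) ℝ[X]) i j := by
  by_cases h : i = j <;>
    simp [Bpoly, Matrix.add_apply, Matrix.smul_apply, smul_eq_mul, Matrix.one_apply,
      Matrix.map_apply, h]

lemma deriv_rel (i : Fin n) :
    vPoly P q i + (Bpoly P).mulVec (fun j => Polynomial.derivative (vPoly P q j)) i
      = Polynomial.derivative (Dpoly P) * Polynomial.C (q i) := by
  have hmain : (Bpoly P).mulVec (vPoly P q) = fun i => Dpoly P * Polynomial.C (q i) := by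
    rw [vPoly, Matrix.mulVec_mulVec, Matrix.mul_adjugate, ← Dpoly]
    funext i
    rw [Matrix.smul_mulVec, Matrix.one_mulVec]
    simp
  have h := congrArg Polynomial.derivative (congrFun hmain i)
  rw [show ((Bpoly P).mulVec (vPoly P q)) i = ∑ j, Bpoly P i j * vPoly P q j from rfl] at h
  rw [Polynomial.derivative_sum] at h
  have hterm : ∀ j, Polynomial.derivative (Bpoly P i j * vPoly P q j)
      = (1 : Matrix (Fin n) (Fin n) ℝ[X]) i j * vPoly P q j
        + Bpoly P i j * Polynomial.derivative (vPoly P q j) := by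
    intro j
    rw [Polynomial.derivative_mul, dBpoly]
  rw [Finset.sum_congr rfl (fun j _ => hterm j), Finset.sum_add_distrib] at h
  have h1 : ∑ j, (1 : Matrix (Fin n) (Fin n) ℝ[X]) i j * vPoly P q j = vPoly P q i := by
    simp [Matrix.one_apply, ite_mul]
  rw [h1] at h
  rw [show ((Bpoly P).mulVec fun j => Polynomial.derivative (vPoly P q j)) i
      = ∑ j, Bpoly P i j * Polynomial.derivative (vPoly P q j) from rfl]
  rw [h, Polynomial.derivative_mul, Polynomial.derivative_C, mul_zero, add_zero]

lemma dot_derivative (u : Fin n → ℝ[X]) :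
    Polynomial.derivative (u ⬝ᵥ u) = 2 * (u ⬝ᵥ fun i => Polynomial.derivative (u i)) := by
  rw [show u ⬝ᵥ u = ∑ i, u i * u i from rfl, Polynomial.derivative_sum]
  rw [show (u ⬝ᵥ fun i => Polynomial.derivative (u i))
      = ∑ i, u i * Polynomial.derivative (u i) from rfl, Finset.mul_sum]
  apply Finset.sum_congr rfl
  intro i _
  rw [Polynomial.derivative_mul]
  ring

section Mult

variable (hP : P.IsSymm) (hr : 0 < r)
  (hneg : ∀ x : Fin n → ℝ, x ≠ 0 → x ⬝ᵥ P.mulVec x < 0)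

include hP hr hneg in
lemma mult_le_one {x : ℝ} (hx : x ≤ 0) :
    ¬ ((Polynomial.X - Polynomial.C x) ^ 2 ∣ (trsM P q r).charpoly) := by
  intro hdvd
  have hr2 : r ^ 2 ≠ 0 := pow_ne_zero 2 (ne_of_gt hr)
  obtain ⟨g, hg⟩ := hdvd
  have heval : (trsM P q r).charpoly.eval x = 0 := by rw [hg]; simp
  have hdeval : (Polynomial.derivative (trsM P q r).charpoly).eval x = 0 := by
    rw [hg, Polynomial.derivative_mul, Polynomial.derivative_pow]
    simp
  set B : Matrix (Fin n) (Fin n) ℝ := x • 1 + P with hB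
  have hBdet : B.det ≠ 0 := by
    intro h
    obtain ⟨v, hv0, hv⟩ := Matrix.exists_mulVec_eq_zero_iff.mpr h
    have hlt := shift_negdef' hneg hx hv0
    rw [hB] at hv
    rw [hv] at hlt
    simp at hlt
  haveI : Invertible B := B.invertibleOfIsUnitDet (isUnit_iff_ne_zero.mpr hBdet)
  have hBsy : B.IsSymm := Bsymm x hP
  set d : ℝ := B.det with hd
  set va : Fin n → ℝ := B.adjugate.mulVec q with hva
  set d' : ℝ := (Polynomial.derivative (Dpoly P)).eval x with hd'
  set va' : Fin n → ℝ := fun i => (Polynomial.derivative (vPoly P q i)).eval x with hva'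
  -- evaluate the identity
  have hid := poly_identity (q := q) hP hr
  have e0 := congrArg (Polynomial.eval x) hid
  simp only [Polynomial.eval_mul, Polynomial.eval_sub, Polynomial.eval_pow,
    Polynomial.eval_C, heval, mul_zero] at e0
  rw [dot_eval, Dpoly_eval] at e0
  have hvx : (fun i => (vPoly P q i).eval x) = va := by
    funext i; rw [vPoly_eval x i, hva, hB]
  rw [hvx, ← hB, ← hd] at e0
  have e0' : va ⬝ᵥ va = r ^ 2 * d ^ 2 := by linarith
  -- evaluate the derivative of the identity
  have e1 := congrArg (fun p => (Polynomial.derivative p).eval x) hid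
  simp only [Polynomial.derivative_mul, Polynomial.derivative_C, zero_mul, zero_add,
    Polynomial.derivative_sub, Polynomial.derivative_pow, Polynomial.eval_add,
    Polynomial.eval_sub, Polynomial.eval_mul, Polynomial.eval_pow,
    Polynomial.eval_C, hdeval, mul_zero] at e1
  rw [dot_derivative, Polynomial.eval_mul, dot_eval, hvx] at e1
  have hvx' : (fun i => ((fun j => Polynomial.derivative (vPoly P q j)) i).eval x) = va' := rfl
  rw [hvx', Dpoly_eval, ← hB, ← hd] at e1
  simp only [Polynomial.eval_ofNat] at e1
  have e1' : va ⬝ᵥ va' = r ^ 2 * (d * d') := by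
    rw [← hd'] at e1
    norm_num at e1
    linarith [e1]
  -- evaluate the structural relation
  have e2 : va + B.mulVec va' = d' • q := by
    funext i
    have h := congrArg (Polynomial.eval x) (deriv_rel (P := P) (q := q) i)
    rw [Polynomial.eval_add, Polynomial.eval_mul, Polynomial.eval_C, vPoly_eval x i] at h
    have hmv : (((Bpoly P).mulVec fun j => Polynomial.derivative (vPoly P q j)) i).eval x
        = (B.mulVec va') i := by
      rw [show (((Bpoly P).mulVec fun j => Polynomial.derivative (vPoly P q j)) i)
          = ∑ j, Bpoly P i j * Polynomial.derivative (vPoly P q j) from rfl]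
      rw [Polynomial.eval_finset_sum]
      rw [show (B.mulVec va') i = ∑ j, B i j * va' j from rfl]
      apply Finset.sum_congr rfl
      intro j _
      rw [Polynomial.eval_mul]
      congr 1
      exact congrFun (congrFun (Bpoly_map (P := P) x) i) j
    rw [hmv] at h
    rw [← hB, ← hd'] at h
    have hvai : va i = (B.adjugate.mulVec q) i := rfl
    simp only [Pi.add_apply, Pi.smul_apply, smul_eq_mul]
    linarith [h, hvai]
  -- final algebra
  set w : Fin n → ℝ := (⅟B).mulVec q with hw
  have hBw : B.mulVec w = q := by
    rw [hw, Matrix.mulVec_mulVec, mul_invOf_self, Matrix.one_mulVec]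
  have hvaw : va = d • w := by
    rw [hva, hd, hw]
    have h1 : B.adjugate = ⅟B * (B.det • (1 : Matrix (Fin n) (Fin n) ℝ)) := by
      rw [← Matrix.mul_adjugate, ← Matrix.mul_assoc, invOf_mul_self, Matrix.one_mul]
    rw [h1, ← Matrix.mulVec_mulVec,
      show (B.det • (1 : Matrix (Fin n) (Fin n) ℝ)).mulVec q = B.det • q by
        rw [Matrix.smul_mulVec, Matrix.one_mulVec],
      Matrix.mulVec_smul]
  have hww : w ⬝ᵥ w = r ^ 2 := by
    have h1 : va ⬝ᵥ va = d ^ 2 * (w ⬝ᵥ w) := by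
      rw [hvaw, smul_dotProduct, dotProduct_smul, smul_eq_mul, smul_eq_mul]
      ring
    have hd2 : d ^ 2 ≠ 0 := pow_ne_zero 2 hBdet
    rw [e0'] at h1
    exact (mul_left_cancel₀ hd2 (by linarith : d ^ 2 * (w ⬝ᵥ w) = d ^ 2 * r ^ 2)).symm ▸ rfl
  set m : Fin n → ℝ := (⅟B).mulVec w with hm
  have hBm : B.mulVec m = w := by
    rw [hm, Matrix.mulVec_mulVec, mul_invOf_self, Matrix.one_mulVec]
  have hva'eq : va' = d' • w - d • m := by
    have h1 : B.mulVec va' = d' • q - va := by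
      rw [← e2]
      funext i
      simp only [Pi.add_apply, Pi.sub_apply]
      ring
    have h2 : va' = (⅟B).mulVec (B.mulVec va') := by
      rw [Matrix.mulVec_mulVec, invOf_mul_self, Matrix.one_mulVec]
    rw [h2, h1, Matrix.mulVec_sub, Matrix.mulVec_smul, ← hw, hvaw, Matrix.mulVec_smul, ← hm]
  have hwm : w ⬝ᵥ m = 0 := by
    have h1 : va ⬝ᵥ va' = d * d' * (w ⬝ᵥ w) - d ^ 2 * (w ⬝ᵥ m) := by
      rw [hvaw, hva'eq, smul_dotProduct, dotProduct_sub,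
        dotProduct_smul, dotProduct_smul, smul_eq_mul, smul_eq_mul,
        smul_eq_mul]
      ring
    rw [e1', hww] at h1
    have hd2 : d ^ 2 ≠ 0 := pow_ne_zero 2 hBdet
    have : d ^ 2 * (w ⬝ᵥ m) = 0 := by linarith
    exact (mul_eq_zero.mp this).resolve_left hd2
  have hw0 : w ≠ 0 := by
    intro h
    rw [h] at hww
    simp only [zero_dotProduct] at hww
    exact hr2 hww.symm
  have hm0 : m ≠ 0 := by
    intro h
    rw [h, Matrix.mulVec_zero] at hBm
    exact hw0 hBm.symm
  have hlt := shift_negdef' hneg hx hm0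
  rw [← hB] at hlt
  rw [← hBm, dotProduct_comm] at hwm
  linarith [hlt, hwm]

end Mult

end TRSAux

open Polynomial in
theorem stmt_13' {n : ℕ} (hn : 1 < n)
    (P : Matrix (Fin n) (Fin n) ℝ) (hP : P.IsSymm)
    (q : Fin n → ℝ) (r : ℝ) (hr : 0 < r)
    (hneg : ∀ x : Fin n → ℝ, x ≠ 0 → x ⬝ᵥ P.mulVec x < 0) :
    2 ≤ Multiset.card
      (((trsMC P q r).charpoly.roots).filter (fun z : ℂ => 0 < z.re)) := by
  classical
  set pC : Polynomial ℂ := (trsMC P q r).charpoly with hpC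
  have hpC0 : pC ≠ 0 := ((trsMC P q r).charpoly_monic).ne_zero
  have hdeg : pC.natDegree = n + n := by
    rw [hpC, Matrix.charpoly_natDegree_eq_dim, Fintype.card_sum, Fintype.card_fin]
  have hcard : Multiset.card pC.roots = n + n := by
    rw [← hdeg]
    exact (Polynomial.splits_iff_card_roots).mp (IsAlgClosed.splits pC)
  set F : Multiset ℂ := pC.roots.filter (fun z : ℂ => ¬ 0 < z.re) with hF
  have hsplit : Multiset.card (pC.roots.filter (fun z : ℂ => 0 < z.re))
      + Multiset.card F = n + n := by
    rw [hF, ← Multiset.card_add, Multiset.filter_add_not, hcard]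
  suffices hFle : Multiset.card F ≤ 1 by omega
  -- every member of F is real, with a witness vector
  have hmem : ∀ z ∈ F, z.im = 0 ∧ ∃ a : Fin n → ℝ,
      (z.re • (1 : Matrix (Fin n) (Fin n) ℝ) + P).mulVec a = q ∧ a ⬝ᵥ a = r ^ 2 := by
    intro z hz
    rw [hF, Multiset.mem_filter] at hz
    have hroot : pC.eval z = 0 := (Polynomial.mem_roots hpC0).mp hz.1
    have hdet : (z • (1 : Matrix (Fin n ⊕ Fin n) (Fin n ⊕ Fin n) ℂ)
        - trsMC P q r).det = 0 := by
      rw [← TRSAux.eval_charpoly]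
      exact hroot
    exact TRSAux.key_real hP hr hneg (not_lt.mp hz.2) hdet
  -- conclude
  rcases Multiset.empty_or_exists_mem F with hFe | ⟨z₀, hz₀⟩
  · rw [hFe]; simp
  have hall : ∀ z ∈ F, z₀ = z := by
    intro z hz
    obtain ⟨him0, a0, ha0, hn0⟩ := hmem z₀ hz₀
    obtain ⟨him1, a1, ha1, hn1⟩ := hmem z hz
    have hre0 : z₀.re ≤ 0 := by
      rw [hF, Multiset.mem_filter] at hz₀; exact not_lt.mp hz₀.2
    have hre1 : z.re ≤ 0 := by
      rw [hF, Multiset.mem_filter] at hz; exact not_lt.mp hz.2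
    have := TRSAux.key_uniq hP hr hneg hre0 hre1 ha0 ha1 hn0 hn1
    exact Complex.ext this (by rw [him0, him1])
  have hcount : Multiset.card F = F.count z₀ := (Multiset.count_eq_card.mpr hall).symm
  have hle1 : F.count z₀ ≤ pC.roots.count z₀ :=
    Multiset.count_le_of_le z₀ (Multiset.filter_le _ _)
  have hrm : pC.roots.count z₀ = pC.rootMultiplicity z₀ := Polynomial.count_roots pC
  -- root multiplicity is at most one
  have hmult : pC.rootMultiplicity z₀ ≤ 1 := by
    by_contra hgt
    push_neg at hgt
    have h2 : (Polynomial.X - Polynomial.C z₀) ^ 2 ∣ pC :=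
      dvd_trans (pow_dvd_pow _ hgt) (pC.pow_rootMultiplicity_dvd z₀)
    -- z₀ is real
    obtain ⟨him0, -⟩ := hmem z₀ hz₀
    have hre0 : z₀.re ≤ 0 := by
      rw [hF, Multiset.mem_filter] at hz₀; exact not_lt.mp hz₀.2
    set x₀ : ℝ := z₀.re with hx₀
    have hz₀eq : z₀ = (x₀ : ℂ) := Complex.ext (by simp [hx₀]) (by simp [him0])
    -- transfer divisibility to ℝ
    have hmapC : pC = ((trsM P q r).charpoly).map Complex.ofRealHom := by
      rw [hpC, show trsMC P q r = (trsM P q r).map Complex.ofRealHom from rfl,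
        Matrix.charpoly_map]
    have hpow : (Polynomial.X - Polynomial.C z₀) ^ 2
        = ((Polynomial.X - Polynomial.C x₀) ^ 2).map Complex.ofRealHom := by
      rw [Polynomial.map_pow, Polynomial.map_sub, Polynomial.map_X, Polynomial.map_C,
        hz₀eq]
      rfl
    rw [hmapC, hpow] at h2
    have hdvdR : (Polynomial.X - Polynomial.C x₀) ^ 2 ∣ (trsM P q r).charpoly :=
      (Polynomial.map_dvd_map Complex.ofRealHom Complex.ofReal_injective
        ((Polynomial.monic_X_sub_C x₀).pow 2)).mp h2
    exact TRSAux.mult_le_one hP hr hneg hre0 hdvdR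
  omega

/-- if `P` is negative definite and `n > 1`, then `M` has at least two
eigenvalues (counted with algebraic multiplicity) with positive real part. -/
theorem stmt_13 {n : ℕ} (hn : 1 < n)
    (P : Matrix (Fin n) (Fin n) ℝ) (hP : P.IsSymm)
    (q : Fin n → ℝ) (r : ℝ) (hr : 0 < r)
    (hneg : ∀ x : Fin n → ℝ, x ≠ 0 → x ⬝ᵥ P.mulVec x < 0) :
    2 ≤ Multiset.card
      (((trsMC P q r).charpoly.roots).filter (fun z : ℂ => 0 < z.re)) := by
  exact stmt_13' hn P hP q r hr hneg
end

section
/- If P is negative definite (so that all eigenvalues λ₁ ≤ … ≤ λₙ of P are negative), then every root of the secular function s with negative real part is real, and s has at most one root (counted with multiplicity) with negative real part; in particular, for any a < 0 with a in the domain of s and any b ≠ 0, s(a + bi) ≠ 0. -/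
open Matrix Complex
open scoped Classical

lemma aux_im {n : ℕ} (lam : Fin n → ℝ) (w : Fin n → Fin n → ℝ) (q : Fin n → ℝ) (r : ℝ)
    (z : ℂ) :
    (secular lam w q r z).im = z.im * ∑ i,
      (-2 * (w i ⬝ᵥ q) ^ 2 * (lam i + z.re)) /
        Complex.normSq ((((lam i : ℝ) : ℂ) + z) * (((lam i : ℝ) : ℂ) + z)) := by
  unfold secular
  rw [Complex.sub_im, Complex.im_sum, Finset.mul_sum]
  have hr2 : ((r : ℂ) ^ 2).im = 0 := by
    rw [sq, Complex.mul_im]; simp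
  rw [hr2, sub_zero]
  refine Finset.sum_congr rfl fun i _ => ?_
  have hnum : (((w i ⬝ᵥ q : ℝ) : ℂ)) ^ 2 = (((w i ⬝ᵥ q) ^ 2 : ℝ) : ℂ) := by push_cast; ring
  rw [hnum, sq (((lam i : ℝ) : ℂ) + z), Complex.div_im, Complex.ofReal_im, Complex.ofReal_re,
    Complex.mul_im, Complex.add_re, Complex.add_im, Complex.ofReal_re, Complex.ofReal_im,
    zero_add]
  ring

lemma aux_ne {n : ℕ} (lam : Fin n → ℝ) (w : Fin n → Fin n → ℝ) (q : Fin n → ℝ) {r : ℝ}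
    (hr : 0 < r) (hlam : ∀ i, lam i < 0) (z : ℂ) (hre : z.re < 0) (him : z.im ≠ 0) :
    secular lam w q r z ≠ 0 := by
  intro hs
  have hE0 : ∑ i, (-2 * (w i ⬝ᵥ q) ^ 2 * (lam i + z.re)) /
      Complex.normSq ((((lam i : ℝ) : ℂ) + z) * (((lam i : ℝ) : ℂ) + z)) = 0 := by
    have := aux_im lam w q r z
    rw [hs, Complex.zero_im] at this
    exact (mul_eq_zero.1 this.symm).resolve_left him
  have hEnn : ∀ i ∈ Finset.univ, 0 ≤ (-2 * (w i ⬝ᵥ q) ^ 2 * (lam i + z.re)) /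
      Complex.normSq ((((lam i : ℝ) : ℂ) + z) * (((lam i : ℝ) : ℂ) + z)) := by
    intro i _
    apply div_nonneg _ (Complex.normSq_nonneg _)
    have h1 : lam i + z.re < 0 := by linarith [hlam i]
    nlinarith [sq_nonneg (w i ⬝ᵥ q)]
  have hc : ∀ i, w i ⬝ᵥ q = 0 := by
    intro i
    have hEi := (Finset.sum_eq_zero_iff_of_nonneg hEnn).1 hE0 i (Finset.mem_univ i)
    have hd : (((lam i : ℝ) : ℂ) + z) ≠ 0 := fun h => him (by
      have := congrArg Complex.im h
      simpa using this)
    have hN : Complex.normSq ((((lam i : ℝ) : ℂ) + z) * (((lam i : ℝ) : ℂ) + z)) ≠ 0 :=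
      ne_of_gt (Complex.normSq_pos.2 (mul_ne_zero hd hd))
    have hnum : -2 * (w i ⬝ᵥ q) ^ 2 * (lam i + z.re) = 0 := by
      exact (div_eq_zero_iff.1 hEi).resolve_right hN
    have h1 : lam i + z.re < 0 := by linarith [hlam i]
    have h2 : (w i ⬝ᵥ q) ^ 2 = 0 := by
      rcases mul_eq_zero.1 hnum with h | h
      · rcases mul_eq_zero.1 h with h' | h'
        · norm_num at h'
        · exact h'
      · exact absurd h (ne_of_lt h1)
    exact pow_eq_zero_iff (two_ne_zero).elim |>.mp (by simpa using h2)
  have hval : secular lam w q r z = -(r : ℂ) ^ 2 := by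
    unfold secular
    rw [Finset.sum_eq_zero fun i _ => by rw [hc i]; simp]
    ring
  rw [hs] at hval
  have hr0 : (r : ℂ) = 0 := by
    have h2 : ((r : ℂ)) ^ 2 = 0 := by linear_combination hval
    exact pow_eq_zero_iff two_ne_zero |>.mp h2
  simp at hr0
  linarith

lemma aux_cast {n : ℕ} (lam : Fin n → ℝ) (w : Fin n → Fin n → ℝ) (q : Fin n → ℝ) (r : ℝ)
    (t : ℝ) : secular lam w q r (t : ℂ) = ((secularR lam w q r t : ℝ) : ℂ) := by
  unfold secular secularR; push_cast; ring

lemma aux_hasDerivR {n : ℕ} (lam : Fin n → ℝ) (w : Fin n → Fin n → ℝ) (q : Fin n → ℝ) (r : ℝ)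
    (x : ℝ) (hx : ∀ i, lam i + x ≠ 0) :
    HasDerivAt (secularR lam w q r) (secularDeriv lam w q x) x := by
  have h : ∀ i ∈ Finset.univ, HasDerivAt (fun t : ℝ => (w i ⬝ᵥ q) ^ 2 / (lam i + t) ^ 2)
      (-2 * ((w i ⬝ᵥ q) ^ 2 / (lam i + x) ^ 3)) x := by
    intro i _
    have h1 : HasDerivAt (fun t : ℝ => lam i + t) 1 x := (hasDerivAt_id x).const_add _
    have h2 := h1.fun_pow 2
    have h3 := (hasDerivAt_const x ((w i ⬝ᵥ q) ^ 2)).fun_div h2 (pow_ne_zero 2 (hx i))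
    refine h3.congr_deriv ?_
    field_simp [hx i]
    ring
  have hsum := (HasDerivAt.fun_sum h).sub_const (r ^ 2)
  have heq : secularDeriv lam w q x = ∑ i, -2 * ((w i ⬝ᵥ q) ^ 2 / (lam i + x) ^ 3) := by
    unfold secularDeriv; rw [Finset.mul_sum]
  rw [heq]
  exact hsum

lemma aux_hasDerivC {n : ℕ} (lam : Fin n → ℝ) (w : Fin n → Fin n → ℝ) (q : Fin n → ℝ) (r : ℝ)
    (z : ℂ) (hz : ∀ i, (((lam i : ℝ) : ℂ) + z) ≠ 0) :
    HasDerivAt (secular lam w q r)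
      (-2 * ∑ i, ((w i ⬝ᵥ q : ℝ) : ℂ) ^ 2 / (((lam i : ℝ) : ℂ) + z) ^ 3) z := by
  have h : ∀ i ∈ Finset.univ, HasDerivAt
      (fun u : ℂ => ((w i ⬝ᵥ q : ℝ) : ℂ) ^ 2 / (((lam i : ℝ) : ℂ) + u) ^ 2)
      (-2 * (((w i ⬝ᵥ q : ℝ) : ℂ) ^ 2 / (((lam i : ℝ) : ℂ) + z) ^ 3)) z := by
    intro i _
    have h1 : HasDerivAt (fun u : ℂ => ((lam i : ℝ) : ℂ) + u) 1 z :=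
      (hasDerivAt_id z).const_add _
    have h2 := h1.fun_pow 2
    have h3 := (hasDerivAt_const z (((w i ⬝ᵥ q : ℝ) : ℂ) ^ 2)).fun_div h2 (pow_ne_zero 2 (hz i))
    refine h3.congr_deriv ?_
    field_simp [hz i]
    ring
  have hsum := (HasDerivAt.fun_sum h).sub_const ((r : ℂ) ^ 2)
  have heq : (-2 : ℂ) * ∑ i, ((w i ⬝ᵥ q : ℝ) : ℂ) ^ 2 / (((lam i : ℝ) : ℂ) + z) ^ 3
      = ∑ i, -2 * (((w i ⬝ᵥ q : ℝ) : ℂ) ^ 2 / (((lam i : ℝ) : ℂ) + z) ^ 3) := by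
    rw [Finset.mul_sum]
  rw [heq]
  exact hsum

lemma aux_analytic {n : ℕ} (lam : Fin n → ℝ) (w : Fin n → Fin n → ℝ) (q : Fin n → ℝ) (r : ℝ)
    (z : ℂ) (hz : ∀ i, (((lam i : ℝ) : ℂ) + z) ≠ 0) :
    AnalyticAt ℂ (secular lam w q r) z := by
  unfold secular
  apply AnalyticAt.sub _ analyticAt_const
  apply Finset.analyticAt_fun_sum
  intro i _
  exact analyticAt_const.div ((analyticAt_const.add (analyticAt_id)).pow 2)
    (pow_ne_zero 2 (hz i))

/-- if `P` is negative definite, then every root of `s` with negative real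
part is real, `s` has at most one root (counted with multiplicity) with negative real
part, and in particular `s(a + bi) ≠ 0` for any `a < 0` in the domain of `s` and `b ≠ 0`. -/
theorem stmt_14 {n : ℕ} (hn : 0 < n)
    (P : Matrix (Fin n) (Fin n) ℝ) (hP : P.IsSymm)
    (lam : Fin n → ℝ) (w : Fin n → Fin n → ℝ)
    (hmono : Monotone lam)
    (heig : ∀ i, P.mulVec (w i) = lam i • w i)
    (horth : ∀ i j, w i ⬝ᵥ w j = if i = j then (1 : ℝ) else 0)
    (q : Fin n → ℝ) (r : ℝ) (hr : 0 < r)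
    (hneg : ∀ x : Fin n → ℝ, x ≠ 0 → x ⬝ᵥ P.mulVec x < 0) :
    (∀ z : ℂ, z.re < 0 → IsNonpole lam w q z → secular lam w q r z = 0 → z.im = 0)
    ∧ (∀ z : ℂ, z.re < 0 → IsNonpole lam w q z → secular lam w q r z = 0 →
        (HasZeroOfOrder (secular lam w q r) z 1 ∧
          ∀ z' : ℂ, z'.re < 0 → IsNonpole lam w q z' → secular lam w q r z' = 0 → z' = z))
    ∧ (∀ a : ℝ, a < 0 → (∀ i, w i ⬝ᵥ q ≠ 0 → a ≠ -(lam i)) →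
        ∀ b : ℝ, b ≠ 0 → secular lam w q r ((a : ℂ) + (b : ℂ) * Complex.I) ≠ 0) := by
  have hwi : ∀ i, w i ⬝ᵥ w i = 1 := fun i => by simpa using horth i i
  have hw0 : ∀ i, w i ≠ 0 := by
    intro i h
    have h1 := hwi i
    rw [h] at h1
    simp at h1
  have hlam : ∀ i, lam i < 0 := by
    intro i
    have h := hneg (w i) (hw0 i)
    rwa [heig i, dotProduct_smul, smul_eq_mul, hwi i, mul_one] at h
  have part1 : ∀ z : ℂ, z.re < 0 → secular lam w q r z = 0 → z.im = 0 := by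
    intro z hz hs
    by_contra him
    exact aux_ne lam w q hr hlam z hz him hs
  refine ⟨fun z hz _ hs => part1 z hz hs, ?_, ?_⟩
  · intro z hzre hznp hs
    have him := part1 z hzre hs
    obtain ⟨t, rfl, ht0⟩ : ∃ t : ℝ, z = (t : ℂ) ∧ t < 0 :=
      ⟨z.re, Complex.ext (by simp) (by simp [him]), hzre⟩
    have hRt : secularR lam w q r t = 0 := by
      have h := aux_cast lam w q r t
      rw [hs] at h
      exact_mod_cast h.symm
    have hne : ∀ i, lam i + t ≠ 0 := fun i => ne_of_lt (by linarith [hlam i])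
    have hex : ∃ i, w i ⬝ᵥ q ≠ 0 := by
      by_contra hall
      push_neg at hall
      have hval : secularR lam w q r t = -r ^ 2 := by
        unfold secularR
        rw [Finset.sum_eq_zero fun i _ => by rw [hall i]; simp]
        ring
      rw [hRt] at hval
      nlinarith
    obtain ⟨i0, hi0⟩ := hex
    have hderivpos : ∀ x : ℝ, x < 0 → 0 < secularDeriv lam w q x := by
      intro x hx
      unfold secularDeriv
      have hcube : ∀ i, (lam i + x) ^ 3 < 0 := by
        intro i
        have h1 : lam i + x < 0 := by linarith [hlam i]
        exact Odd.pow_neg ⟨1, by norm_num⟩ h1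
      have hterm : ∀ i ∈ Finset.univ, (w i ⬝ᵥ q) ^ 2 / (lam i + x) ^ 3 ≤ (0 : ℝ) := by
        intro i _
        exact div_nonpos_of_nonneg_of_nonpos (sq_nonneg _) (le_of_lt (hcube i))
      have hi0' : (w i0 ⬝ᵥ q) ^ 2 / (lam i0 + x) ^ 3 < 0 :=
        div_neg_of_pos_of_neg (by positivity) (hcube i0)
      have hsum : ∑ i, (w i ⬝ᵥ q) ^ 2 / (lam i + x) ^ 3 < ∑ _i : Fin n, (0 : ℝ) :=
        Finset.sum_lt_sum hterm ⟨i0, Finset.mem_univ i0, hi0'⟩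
      rw [Finset.sum_const, smul_zero] at hsum
      linarith
    have hmonoS : StrictMonoOn (secularR lam w q r) (Set.Iio 0) := by
      apply strictMonoOn_of_deriv_pos (convex_Iio 0)
      · intro x hx
        have hx' : x < 0 := Set.mem_Iio.1 hx
        exact (aux_hasDerivR lam w q r x fun i =>
          ne_of_lt (by linarith [hlam i])).continuousAt.continuousWithinAt
      · intro x hx
        rw [interior_Iio] at hx
        have hx' : x < 0 := Set.mem_Iio.1 hx
        rw [(aux_hasDerivR lam w q r x fun i => ne_of_lt (by linarith [hlam i])).deriv]
        exact hderivpos x hx'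
    constructor
    · have hzC : ∀ i, (((lam i : ℝ) : ℂ) + (t : ℂ)) ≠ 0 := by
        intro i h
        have h1 := congrArg Complex.re h
        simp at h1
        exact hne i (by linarith)
      have hD := aux_hasDerivC lam w q r (t : ℂ) hzC
      have hDval : (-2 * ∑ i, ((w i ⬝ᵥ q : ℝ) : ℂ) ^ 2 / (((lam i : ℝ) : ℂ) + (t : ℂ)) ^ 3)
          = ((secularDeriv lam w q t : ℝ) : ℂ) := by
        unfold secularDeriv; push_cast; ring
      have hD0 : deriv (secular lam w q r) (t : ℂ) ≠ 0 := by
        rw [hD.deriv, hDval]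
        exact_mod_cast ne_of_gt (hderivpos t ht0)
      obtain ⟨p, hp⟩ := aux_analytic lam w q r (t : ℂ) hzC
      refine ⟨dslope (secular lam w q r) (t : ℂ),
        (hp.has_fpower_series_dslope_fslope).analyticAt, ?_, ?_⟩
      · rw [dslope_same]; exact hD0
      · refine Filter.Eventually.of_forall fun u => ?_
        have h := sub_smul_dslope (secular lam w q r) (t : ℂ) u
        rw [hs, sub_zero] at h
        rw [pow_one, ← h, smul_eq_mul]
    · intro z' hz're hz'np hs'
      have him' := part1 z' hz're hs'
      obtain ⟨t', rfl, ht'0⟩ : ∃ t' : ℝ, z' = (t' : ℂ) ∧ t' < 0 :=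
        ⟨z'.re, Complex.ext (by simp) (by simp [him']), hz're⟩
      have hRt' : secularR lam w q r t' = 0 := by
        have h := aux_cast lam w q r t'
        rw [hs'] at h
        exact_mod_cast h.symm
      have : t' = t := hmonoS.injOn (Set.mem_Iio.2 ht'0) (Set.mem_Iio.2 ht0)
        (by rw [hRt', hRt])
      rw [this]
  · intro a ha hnp b hb
    apply aux_ne lam w q hr hlam
    · simp [ha]
    · simp [hb]
end
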